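/- arXiv:1610.03587 — 7 statements merged into one kernel-verified Lean document; each statement's English description precedes it below -/
import Mathlib

section
/- Suppose s | m and there exists an (mg₁g₂, mg₁, {K₀,…,K_{M−1}}, 1)-BNCRDP of size u₁ over Z_{mg₁g₂}, say {B₀,…,B_{M−1}}, such that for each j the set of all elements of the base blocks of B_j together with {0, g₂, 2g₂, …, ((mg₁/s)−1)g₂} is a complete system of representatives for the cosets of (mg₁g₂/s)Z_{mg₁g₂} in Z_{mg₁g₂}. Suppose further there exists an (mg₁, m, {K₀′,…,K_{M−1}′}, 1)-BNCRDP of size u₂ over Z_{mg₁}, say {B₀′,…,B_{M−1}′}, such that for each j the set of all elements of the base blocks of B_j′ together with {0, g₁, …, ((m/s)−1)g₁} is a complete system of representatives for the cosets of (mg₁/s)Z_{mg₁} in Z_{mg₁}. Then there exists an (mg₁g₂, m, {K₀∪K₀′, …, K_{M−1}∪K_{M−1}′}, 1)-BNCRDP of size u₁+u₂ over Z_{mg₁g₂}, say {A₀,…,A_{M−1}}, such that for each j the set of all elements of the base blocks of A_j together with {0, g₁g₂, …, ((m/s)−1)g₁g₂} is a complete system of representatives for the cosets of (mg₁g₂/s)Z_{mg₁g₂}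 in Z_{mg₁g₂}. -/
open scoped Classical

/-- The multiset of all elements of the base blocks of a family `B`. -/
def blockElems {n u : ℕ} (B : Fin u → Finset (ZMod n)) : Multiset (ZMod n) :=
  ∑ i : Fin u, (B i).val

/-- The multiset of internal differences `Δ(B)`. -/
def deltaList {n u : ℕ} (B : Fin u → Finset (ZMod n)) : Multiset (ZMod n) :=
  ∑ i : Fin u, (((B i) ×ˢ (B i)).filter (fun p => p.1 ≠ p.2)).val.map (fun p => p.1 - p.2)

/-- The multiset of external differences `Δ_E(B, B')`. -/
def deltaE {n u : ℕ} (B B' : Fin u → Finset (ZMod n)) : Multiset (ZMod n) :=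
  ∑ i : Fin u, ((B i) ×ˢ (B' i)).val.map (fun p => p.2 - p.1)

/-- `x` is a multiple of `d` in `ZMod n`, i.e. `x ∈ d·Z_n`. -/
def inSub (n d : ℕ) (x : ZMod n) : Prop := ∃ y : ZMod n, x = (d : ZMod n) * y

/-- The multiset `T` is a complete system of representatives for the cosets of
`d·Z_n` in `Z_n`: each coset contains exactly one element of `T`
(counted with multiplicity). -/
def IsCSR (n d : ℕ) (T : Multiset (ZMod n)) : Prop :=
  ∀ x : ZMod n, Multiset.card (T.filter (fun t => inSub n d (x - t))) = 1

/-- `B` is an `(n, K, λ)`-CDP. -/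
def IsCDP (n u lam : ℕ) (K : Set ℕ) (B : Fin u → Finset (ZMod n)) : Prop :=
  (∀ i, (B i).card ∈ K) ∧ ∀ x : ZMod n, x ≠ 0 → (deltaList B).count x ≤ lam

/-- `B` is an `(n, {K₀,…,K_{M−1}}, λ)`-BNCDP of size `u`. -/
def IsBNCDP (n M u lam : ℕ) (K : Fin M → Set ℕ)
    (B : Fin M → Fin u → Finset (ZMod n)) : Prop :=
  (∀ j, IsCDP n u lam (K j) (B j)) ∧
  ∀ j j' : Fin M, j ≠ j' → ∀ x : ZMod n, (deltaE (B j) (B j')).count x ≤ lam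

/-- `B` is an `(n, g, K, 1)`-CRDP (relative to the subgroup `H = (n/g)·Z_n` of order `g`). -/
def IsCRDP (n g u : ℕ) (K : Set ℕ) (B : Fin u → Finset (ZMod n)) : Prop :=
  (∀ i, (B i).card ∈ K) ∧
  (∀ x : ZMod n, inSub n (n / g) x → (deltaList B).count x = 0) ∧
  (∀ x : ZMod n, (deltaList B).count x ≤ 1)

/-- `B` is an `(n, g, {K₀,…,K_{M−1}}, 1)`-BNCRDP of size `u`. -/
def IsBNCRDP (n g M u : ℕ) (K : Fin M → Set ℕ)
    (B : Fin M → Fin u → Finset (ZMod n)) : Prop :=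
  (∀ j, IsCRDP n g u (K j) (B j)) ∧
  ∀ j j' : Fin M, j ≠ j' →
    (∀ x : ZMod n, inSub n (n / g) x → (deltaE (B j) (B j')).count x = 0) ∧
    (∀ x : ZMod n, (deltaE (B j) (B j')).count x ≤ 1)


noncomputable def phi (n₁ g₂ : ℕ) : ZMod n₁ →+ ZMod (n₁ * g₂) :=
  ZMod.lift n₁ ⟨zmultiplesHom _ ((g₂ : ZMod (n₁ * g₂))), by
    have h : ((n₁ * g₂ : ℕ) : ZMod (n₁ * g₂)) = 0 := ZMod.natCast_self _
    simp only [zmultiplesHom_apply, zsmul_eq_mul]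
    push_cast at h ⊢
    rw [← h]⟩

lemma phi_natCast (n₁ g₂ : ℕ) (k : ℕ) :
    phi n₁ g₂ (k : ZMod n₁) = ((k * g₂ : ℕ) : ZMod (n₁ * g₂)) := by
  have h : ((k : ℕ) : ZMod n₁) = ((k : ℤ) : ZMod n₁) := by push_cast; rfl
  rw [phi, h, ZMod.lift_coe]
  simp only [zmultiplesHom_apply, zsmul_eq_mul]
  push_cast; ring

lemma phi_apply (n₁ g₂ : ℕ) [NeZero n₁] (x : ZMod n₁) :
    phi n₁ g₂ x = ((x.val * g₂ : ℕ) : ZMod (n₁ * g₂)) := by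
  conv_lhs => rw [← ZMod.natCast_zmod_val x]
  rw [phi_natCast]

lemma phi_inj (n₁ g₂ : ℕ) [NeZero n₁] (hg : g₂ ≠ 0) :
    Function.Injective (phi n₁ g₂) := by
  haveI : NeZero (n₁ * g₂) := ⟨mul_ne_zero (NeZero.ne n₁) hg⟩
  rw [injective_iff_map_eq_zero]
  intro a ha
  rw [phi_apply, ZMod.natCast_eq_zero_iff] at ha
  have h1 : n₁ ∣ a.val := (Nat.mul_dvd_mul_iff_right (Nat.pos_of_ne_zero hg)).mp ha
  have h2 : a.val = 0 := Nat.eq_zero_of_dvd_of_lt h1 (ZMod.val_lt a)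
  exact (ZMod.val_eq_zero a).mp h2

lemma inSub_mono {n a b : ℕ} (h : a ∣ b) {x : ZMod n} (hx : inSub n b x) : inSub n a x := by
  obtain ⟨c, rfl⟩ := h
  obtain ⟨y, rfl⟩ := hx
  exact ⟨(c : ZMod n) * y, by push_cast; ring⟩

lemma inSub_add {n d : ℕ} {x y : ZMod n} (hx : inSub n d x) (hy : inSub n d y) :
    inSub n d (x + y) := by
  obtain ⟨a, rfl⟩ := hx; obtain ⟨b, rfl⟩ := hy
  exact ⟨a + b, by ring⟩

lemma inSub_iff_int {n e : ℕ} [NeZero n] (he : e ∣ n) {z : ZMod n} {a : ℤ}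
    (ha : (a : ZMod n) = z) : inSub n e z ↔ (e : ℤ) ∣ a := by
  constructor
  · rintro ⟨y, hz⟩
    have h0 : ((a - e * y.val : ℤ) : ZMod n) = 0 := by
      push_cast
      rw [ha, ZMod.natCast_zmod_val, hz]
      ring
    have hn : (n : ℤ) ∣ a - e * y.val := (ZMod.intCast_zmod_eq_zero_iff_dvd _ _).mp h0
    have he' : (e : ℤ) ∣ (n : ℤ) := Int.natCast_dvd_natCast.mpr he
    have : (e : ℤ) ∣ a - e * y.val := he'.trans hn
    have h2 : (e : ℤ) ∣ (e : ℤ) * (y.val : ℤ) := Dvd.intro _ rfl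
    have := dvd_add this h2
    simpa using this
  · rintro ⟨t, rfl⟩
    refine ⟨(t : ZMod n), ?_⟩
    rw [← ha]; push_cast; ring

lemma inSub_iff_dvd_val {n e : ℕ} [NeZero n] (he : e ∣ n) (z : ZMod n) :
    inSub n e z ↔ (e : ℤ) ∣ (z.val : ℤ) :=
  inSub_iff_int he (by push_cast; rw [ZMod.natCast_zmod_val])

lemma inSub_phi_iff {n₁ g₂ : ℕ} [NeZero n₁] (hg : g₂ ≠ 0) {a : ℕ} (ha : a ∣ n₁)
    (w : ZMod n₁) : inSub (n₁ * g₂) (a * g₂) (phi n₁ g₂ w) ↔ inSub n₁ a w := by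
  haveI : NeZero (n₁ * g₂) := ⟨mul_ne_zero (NeZero.ne n₁) hg⟩
  have h1 : (((w.val * g₂ : ℕ) : ℤ) : ZMod (n₁ * g₂)) = phi n₁ g₂ w := by
    rw [phi_apply]; push_cast; ring
  rw [inSub_iff_int (mul_dvd_mul ha dvd_rfl) h1, inSub_iff_dvd_val ha]
  have hg' : (g₂ : ℤ) ≠ 0 := by exact_mod_cast hg
  push_cast
  rw [mul_dvd_mul_iff_right hg']

lemma inSub_g₂_iff {n₁ g₂ : ℕ} [NeZero n₁] (hg : g₂ ≠ 0) (x : ZMod (n₁ * g₂)) :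
    inSub (n₁ * g₂) g₂ x ↔ ∃ w, x = phi n₁ g₂ w := by
  haveI : NeZero (n₁ * g₂) := ⟨mul_ne_zero (NeZero.ne n₁) hg⟩
  constructor
  · intro h
    have := (inSub_iff_dvd_val (n := n₁ * g₂) ⟨n₁, mul_comm _ _⟩ x).mp h
    have h2 : g₂ ∣ x.val := by exact_mod_cast this
    obtain ⟨t, ht⟩ := h2
    refine ⟨(t : ZMod n₁), ?_⟩
    rw [phi_natCast, ← ZMod.natCast_zmod_val x, ht, mul_comm g₂ t]
  · rintro ⟨w, rfl⟩
    rw [phi_apply]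
    exact ⟨(w.val : ZMod (n₁ * g₂)), by push_cast; ring⟩

lemma multiset_prod_map_map {α β : Type*} (f g : α → β) (s t : Multiset α) :
    (s.map f) ×ˢ (t.map g) = (s ×ˢ t).map (Prod.map f g) := by
  induction s using Multiset.induction with
  | empty => simp [Multiset.zero_product]
  | cons a s ih =>
      simp only [Multiset.map_cons, Multiset.cons_product, Multiset.map_add, ih,
        Multiset.map_map]
      rfl

lemma multiset_map_finsum {α β ι : Type*} (f : α → β) (s : Finset ι) (g : ι → Multiset α) :
    Multiset.map f (∑ i ∈ s, g i) = ∑ i ∈ s, (g i).map f :=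
  map_sum (Multiset.mapAddMonoidHom f) g s

section Decomp

variable {n₁ g₂ : ℕ} [NeZero n₁] (hg : g₂ ≠ 0)

/-- the embedding of finsets along `phi` -/
noncomputable def phiEmb (n₁ g₂ : ℕ) [NeZero n₁] (hg : g₂ ≠ 0) :
    ZMod n₁ ↪ ZMod (n₁ * g₂) := ⟨phi n₁ g₂, phi_inj n₁ g₂ hg⟩

@[simp] lemma phiEmb_coe : ⇑(phiEmb n₁ g₂ hg) = ⇑(phi n₁ g₂) := rfl

lemma blockElems_map {u : ℕ} (P : Fin u → Finset (ZMod n₁)) :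
    blockElems (fun i => (P i).map (phiEmb n₁ g₂ hg)) =
      (blockElems P).map (phi n₁ g₂) := by
  unfold blockElems
  rw [multiset_map_finsum]
  rfl

lemma deltaE_map {u : ℕ} (P Q : Fin u → Finset (ZMod n₁)) :
    deltaE (fun i => (P i).map (phiEmb n₁ g₂ hg)) (fun i => (Q i).map (phiEmb n₁ g₂ hg)) =
      (deltaE P Q).map (phi n₁ g₂) := by
  unfold deltaE
  rw [multiset_map_finsum]
  refine Finset.sum_congr rfl fun i _ => ?_
  show _ = Multiset.map (phi n₁ g₂) _
  rw [Finset.product_val, Finset.map_val, Finset.map_val, phiEmb_coe,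
    multiset_prod_map_map, Multiset.map_map, Multiset.map_map]
  apply Multiset.map_congr rfl
  intro p _
  show phi n₁ g₂ p.2 - phi n₁ g₂ p.1 = phi n₁ g₂ (p.2 - p.1)
  rw [map_sub]

lemma deltaList_map {u : ℕ} (P : Fin u → Finset (ZMod n₁)) :
    deltaList (fun i => (P i).map (phiEmb n₁ g₂ hg)) =
      (deltaList P).map (phi n₁ g₂) := by
  unfold deltaList
  rw [multiset_map_finsum]
  refine Finset.sum_congr rfl fun i _ => ?_
  show _ = Multiset.map (phi n₁ g₂) _
  rw [Finset.filter_val, Finset.product_val, Finset.map_val, phiEmb_coe,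
    multiset_prod_map_map, Multiset.filter_map]
  have hcong : Multiset.filter ((fun (p : ZMod (n₁*g₂) × ZMod (n₁*g₂)) => p.1 ≠ p.2) ∘
        (Prod.map (phi n₁ g₂) (phi n₁ g₂))) ((P i).val ×ˢ (P i).val) =
      Multiset.filter (fun p => p.1 ≠ p.2) ((P i).val ×ˢ (P i).val) := by
    apply Multiset.filter_congr
    intro p _
    exact (phi_inj n₁ g₂ hg).ne_iff
  rw [hcong, Multiset.map_map, Multiset.map_map]
  rw [Finset.filter_val, Finset.product_val]
  apply Multiset.map_congr rfl
  intro p _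
  show phi n₁ g₂ p.1 - phi n₁ g₂ p.2 = phi n₁ g₂ (p.1 - p.2)
  rw [map_sub]

end Decomp

lemma isCSR_range {n e : ℕ} [NeZero n] (he : e ∣ n) (he0 : e ≠ 0) :
    IsCSR n e ((Multiset.range e).map (fun k : ℕ => (k : ZMod n))) := by
  intro x
  rw [← Multiset.countP_eq_card_filter, Multiset.countP_map]
  have key : ∀ k ∈ Multiset.range e, (inSub n e (x - ((k : ℕ) : ZMod n)) ↔ k = x.val % e) := by
    intro k hk
    have hk' : k < e := Multiset.mem_range.mp hk
    have hrep : (((x.val : ℤ) - k : ℤ) : ZMod n) = x - (k : ZMod n) := by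
      push_cast
      rw [ZMod.natCast_zmod_val]
    rw [inSub_iff_int he hrep]
    constructor
    · intro hdvd
      have h1 : (k : ℤ) % e = (x.val : ℤ) % e := Int.modEq_iff_dvd.mpr hdvd
      have h2 : (k : ℤ) % e = k := Int.emod_eq_of_lt (by positivity) (by exact_mod_cast hk')
      have h3 : ((x.val % e : ℕ) : ℤ) = (x.val : ℤ) % e := by push_cast; ring
      omega
    · rintro rfl
      have h4 := Int.mul_ediv_add_emod (x.val : ℤ) e
      have h3 : ((x.val % e : ℕ) : ℤ) = (x.val : ℤ) % e := by push_cast; ring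
      refine ⟨(x.val : ℤ) / e, ?_⟩
      omega
  rw [Multiset.filter_congr key]
  have hfe : Multiset.filter (fun k => k = x.val % e) (Multiset.range e) =
      Multiset.filter (· = x.val % e) (Multiset.range e) := by
    apply Multiset.filter_congr; intro k _; rfl
  rw [hfe, Multiset.filter_eq', Multiset.card_replicate]
  exact Multiset.count_eq_one_of_mem (Multiset.nodup_range e)
    (Multiset.mem_range.mpr (Nat.mod_lt _ (Nat.pos_of_ne_zero he0)))

lemma count_map_phi_eq_zero {n₁ g₂ : ℕ} [NeZero n₁] (hg : g₂ ≠ 0)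
    (M : Multiset (ZMod n₁)) {x : ZMod (n₁ * g₂)} (hx : ¬ inSub (n₁ * g₂) g₂ x) :
    (M.map (phi n₁ g₂)).count x = 0 := by
  rw [Multiset.count_eq_zero]
  intro hmem
  obtain ⟨w, _, rfl⟩ := Multiset.mem_map.mp hmem
  exact hx ((inSub_g₂_iff hg _).mpr ⟨w, rfl⟩)

/-- transfer of CSR counts along `phi` -/
lemma csr_phi_count {n₁ g₂ e : ℕ} [NeZero n₁] (hg : g₂ ≠ 0) (he : e ∣ n₁)
    (T : Multiset (ZMod n₁)) (hT : IsCSR n₁ e T) (x : ZMod (n₁ * g₂)) :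
    Multiset.card ((T.map (phi n₁ g₂)).filter (fun t => inSub (n₁ * g₂) (e * g₂) (x - t))) =
      if inSub (n₁ * g₂) g₂ x then 1 else 0 := by
  haveI : NeZero (n₁ * g₂) := ⟨mul_ne_zero (NeZero.ne n₁) hg⟩
  rw [← Multiset.countP_eq_card_filter, Multiset.countP_map]
  by_cases hx : inSub (n₁ * g₂) g₂ x
  · rw [if_pos hx]
    obtain ⟨w, rfl⟩ := (inSub_g₂_iff hg x).mp hx
    have key : ∀ y ∈ T, (inSub (n₁ * g₂) (e * g₂) (phi n₁ g₂ w - phi n₁ g₂ y) ↔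
        inSub n₁ e (w - y)) := by
      intro y _
      rw [← map_sub]
      exact inSub_phi_iff hg he _
    rw [Multiset.filter_congr key]
    exact hT w
  · rw [if_neg hx]
    rw [← Multiset.countP_eq_card_filter, Multiset.countP_eq_zero]
    intro y _ hy
    apply hx
    have h1 : inSub (n₁ * g₂) g₂ (x - phi n₁ g₂ y) :=
      inSub_mono (Dvd.intro_left e rfl) hy
    have h2 : inSub (n₁ * g₂) g₂ (phi n₁ g₂ y) := (inSub_g₂_iff hg _).mpr ⟨y, rfl⟩
    have := inSub_add h1 h2
    rwa [sub_add_cancel] at this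

lemma sum_addCases {γ : Type*} [AddCommMonoid γ] {u₁ u₂ : ℕ} {α : Type*} (f : α → γ)
    (P : Fin u₁ → α) (Q : Fin u₂ → α) :
    ∑ i : Fin (u₁ + u₂), f (Fin.addCases P Q i) = (∑ i, f (P i)) + ∑ i, f (Q i) := by
  rw [Fin.sum_univ_add]; simp

lemma sum_addCases₂ {γ : Type*} [AddCommMonoid γ] {u₁ u₂ : ℕ} {α : Type*} (f : α → α → γ)
    (P P' : Fin u₁ → α) (Q Q' : Fin u₂ → α) :
    ∑ i : Fin (u₁ + u₂), f (Fin.addCases P Q i) (Fin.addCases P' Q' i) =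
      (∑ i, f (P i) (P' i)) + ∑ i, f (Q i) (Q' i) := by
  rw [Fin.sum_univ_add]; simp

theorem stmt0 (m g₁ g₂ s M u₁ u₂ : ℕ)
    (hm : 0 < m) (hg₁ : 0 < g₁) (hg₂ : 0 < g₂) (hs : 0 < s) (hsm : s ∣ m)
    (K K' : Fin M → Set ℕ)
    (B : Fin M → Fin u₁ → Finset (ZMod (m * g₁ * g₂)))
    (hB : IsBNCRDP (m * g₁ * g₂) (m * g₁) M u₁ K B)
    (hBcsr : ∀ j, IsCSR (m * g₁ * g₂) (m * g₁ * g₂ / s)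
      (blockElems (B j) +
        (Multiset.range (m * g₁ / s)).map (fun k => ((k * g₂ : ℕ) : ZMod (m * g₁ * g₂)))))
    (B' : Fin M → Fin u₂ → Finset (ZMod (m * g₁)))
    (hB' : IsBNCRDP (m * g₁) m M u₂ K' B')
    (hB'csr : ∀ j, IsCSR (m * g₁) (m * g₁ / s)
      (blockElems (B' j) +
        (Multiset.range (m / s)).map (fun k => ((k * g₁ : ℕ) : ZMod (m * g₁))))) :
    ∃ A : Fin M → Fin (u₁ + u₂) → Finset (ZMod (m * g₁ * g₂)),
      IsBNCRDP (m * g₁ * g₂) m M (u₁ + u₂) (fun j => K j ∪ K' j) A ∧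
      ∀ j, IsCSR (m * g₁ * g₂) (m * g₁ * g₂ / s)
        (blockElems (A j) +
          (Multiset.range (m / s)).map (fun k => ((k * (g₁ * g₂) : ℕ) : ZMod (m * g₁ * g₂)))) := by
  haveI hn1 : NeZero (m * g₁) := ⟨by positivity⟩
  haveI hn2 : NeZero (m * g₁ * g₂) := ⟨by positivity⟩
  obtain ⟨m', hm'⟩ := hsm
  have hg₂0 : g₂ ≠ 0 := hg₂.ne'
  have hm'0 : m' ≠ 0 := by intro h; rw [h, mul_zero] at hm'; omega
  -- division facts
  have hdiv1 : m * g₁ * g₂ / (m * g₁) = g₂ := Nat.mul_div_cancel_left _ (by positivity)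
  have hdiv2 : m * g₁ * g₂ / m = g₁ * g₂ := by
    rw [mul_assoc]; exact Nat.mul_div_cancel_left _ hm
  have hdiv3 : m * g₁ / m = g₁ := Nat.mul_div_cancel_left _ hm
  have hdivs1 : m / s = m' := by rw [hm', Nat.mul_div_cancel_left _ hs]
  have hdivs2 : m * g₁ / s = m' * g₁ := by
    rw [hm', mul_assoc, Nat.mul_div_cancel_left _ hs]
  have hdivs3 : m * g₁ * g₂ / s = m' * g₁ * g₂ := by
    rw [hm', mul_assoc, mul_assoc, Nat.mul_div_cancel_left _ hs, ← mul_assoc]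
  -- divisibility facts
  have hg₁dvd : g₁ ∣ m * g₁ := dvd_mul_left g₁ m
  have he₁dvd : m' * g₁ ∣ m * g₁ := ⟨s, by rw [hm']; ring⟩
  have he₁0 : m' * g₁ ≠ 0 := by positivity
  -- the construction
  refine ⟨fun j => Fin.addCases (B j) (fun i => (B' j i).map (phiEmb (m * g₁) g₂ hg₂0)), ?_, ?_⟩
  · -- BNCRDP property
    have hA_dl : ∀ j, deltaList (Fin.addCases (B j) (fun i => (B' j i).map (phiEmb (m * g₁) g₂ hg₂0))) =
        deltaList (B j) + (deltaList (B' j)).map (phi (m * g₁) g₂) := by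
      intro j
      rw [← deltaList_map hg₂0 (B' j)]
      unfold deltaList
      exact sum_addCases
        (fun X : Finset (ZMod (m * g₁ * g₂)) =>
          ((X ×ˢ X).filter (fun p => p.1 ≠ p.2)).val.map (fun p => p.1 - p.2))
        (B j) (fun i => (B' j i).map (phiEmb (m * g₁) g₂ hg₂0))
    have hA_dE : ∀ j j', deltaE (Fin.addCases (B j) (fun i => (B' j i).map (phiEmb (m * g₁) g₂ hg₂0)))
        (Fin.addCases (B j') (fun i => (B' j' i).map (phiEmb (m * g₁) g₂ hg₂0))) =
        deltaE (B j) (B j') + (deltaE (B' j) (B' j')).map (phi (m * g₁) g₂) := by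
      intro j j'
      rw [← deltaE_map hg₂0 (B' j) (B' j')]
      unfold deltaE
      exact sum_addCases₂
        (fun X Y : Finset (ZMod (m * g₁ * g₂)) => (X ×ˢ Y).val.map (fun p => p.2 - p.1))
        (B j) (B j') (fun i => (B' j i).map (phiEmb (m * g₁) g₂ hg₂0))
        (fun i => (B' j' i).map (phiEmb (m * g₁) g₂ hg₂0))
    constructor
    · -- each is a CRDP
      intro j
      obtain ⟨hBc, hBz, hBle⟩ := hB.1 j
      obtain ⟨hB'c, hB'z, hB'le⟩ := hB'.1 j
      refine ⟨?_, ?_, ?_⟩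
      · intro i
        refine Fin.addCases ?_ ?_ i
        · intro l; simp only [Fin.addCases_left]; exact Or.inl (hBc l)
        · intro r; simp only [Fin.addCases_right, Finset.card_map]; exact Or.inr (hB'c r)
      · intro x hx
        rw [hdiv2] at hx
        rw [hA_dl j, Multiset.count_add]
        have hxg₂ : inSub (m * g₁ * g₂) g₂ x := inSub_mono (dvd_mul_left g₂ g₁) hx
        have h1 : (deltaList (B j)).count x = 0 := hBz x (by rw [hdiv1]; exact hxg₂)
        obtain ⟨w, rfl⟩ := (inSub_g₂_iff hg₂0 x).mp hxg₂
        have hw : inSub (m * g₁) g₁ w := (inSub_phi_iff hg₂0 hg₁dvd w).mp hx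
        have h2 : ((deltaList (B' j)).map (phi (m * g₁) g₂)).count (phi (m * g₁) g₂ w) = (deltaList (B' j)).count w :=
          Multiset.count_map_eq_count' (phi (m * g₁) g₂) _ (phi_inj _ _ hg₂0) w
        have h3 : (deltaList (B' j)).count w = 0 := hB'z w (by rw [hdiv3]; exact hw)
        omega
      · intro x
        rw [hA_dl j, Multiset.count_add]
        by_cases hx : inSub (m * g₁ * g₂) g₂ x
        · have h1 : (deltaList (B j)).count x = 0 := hBz x (by rw [hdiv1]; exact hx)
          obtain ⟨w, rfl⟩ := (inSub_g₂_iff hg₂0 x).mp hx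
          have h2 : ((deltaList (B' j)).map (phi (m * g₁) g₂)).count (phi (m * g₁) g₂ w) = (deltaList (B' j)).count w :=
            Multiset.count_map_eq_count' (phi (m * g₁) g₂) _ (phi_inj _ _ hg₂0) w
          have h3 := hB'le w
          omega
        · have h2 : ((deltaList (B' j)).map (phi (m * g₁) g₂)).count x = 0 :=
            count_map_phi_eq_zero hg₂0 _ hx
          have h1 := hBle x
          omega
    · -- external differences
      intro j j' hjj'
      obtain ⟨hEz, hEle⟩ := hB.2 j j' hjj'
      obtain ⟨hE'z, hE'le⟩ := hB'.2 j j' hjj'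
      constructor
      · intro x hx
        rw [hdiv2] at hx
        rw [hA_dE j j', Multiset.count_add]
        have hxg₂ : inSub (m * g₁ * g₂) g₂ x := inSub_mono (dvd_mul_left g₂ g₁) hx
        have h1 : (deltaE (B j) (B j')).count x = 0 := hEz x (by rw [hdiv1]; exact hxg₂)
        obtain ⟨w, rfl⟩ := (inSub_g₂_iff hg₂0 x).mp hxg₂
        have hw : inSub (m * g₁) g₁ w := (inSub_phi_iff hg₂0 hg₁dvd w).mp hx
        have h2 : ((deltaE (B' j) (B' j')).map (phi (m * g₁) g₂)).count (phi (m * g₁) g₂ w) =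
            (deltaE (B' j) (B' j')).count w :=
          Multiset.count_map_eq_count' (phi (m * g₁) g₂) _ (phi_inj _ _ hg₂0) w
        have h3 : (deltaE (B' j) (B' j')).count w = 0 := hE'z w (by rw [hdiv3]; exact hw)
        omega
      · intro x
        rw [hA_dE j j', Multiset.count_add]
        by_cases hx : inSub (m * g₁ * g₂) g₂ x
        · have h1 : (deltaE (B j) (B j')).count x = 0 := hEz x (by rw [hdiv1]; exact hx)
          obtain ⟨w, rfl⟩ := (inSub_g₂_iff hg₂0 x).mp hx
          have h2 : ((deltaE (B' j) (B' j')).map (phi (m * g₁) g₂)).count (phi (m * g₁) g₂ w) =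
              (deltaE (B' j) (B' j')).count w :=
            Multiset.count_map_eq_count' (phi (m * g₁) g₂) _ (phi_inj _ _ hg₂0) w
          have h3 := hE'le w
          omega
        · have h2 : ((deltaE (B' j) (B' j')).map (phi (m * g₁) g₂)).count x = 0 :=
            count_map_phi_eq_zero hg₂0 _ hx
          have h1 := hEle x
          omega
  · -- CSR property
    intro j
    have hA_bl : blockElems (Fin.addCases (B j) (fun i => (B' j i).map (phiEmb (m * g₁) g₂ hg₂0))) =
        blockElems (B j) + (blockElems (B' j)).map (phi (m * g₁) g₂) := by
      rw [← blockElems_map hg₂0 (B' j)]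
      unfold blockElems
      exact sum_addCases (fun X : Finset (ZMod (m * g₁ * g₂)) => X.val)
        (B j) (fun i => (B' j i).map (phiEmb (m * g₁) g₂ hg₂0))
    intro x
    rw [hdivs1, hdivs3, hA_bl]
    -- rewrite the range part as a φ-image
    have hRA : (Multiset.range m').map (fun k => ((k * (g₁ * g₂) : ℕ) : ZMod (m * g₁ * g₂))) =
        ((Multiset.range m').map (fun k => ((k * g₁ : ℕ) : ZMod (m * g₁)))).map (phi (m * g₁) g₂) := by
      rw [Multiset.map_map]
      apply Multiset.map_congr rfl
      intro k _
      show ((k * (g₁ * g₂) : ℕ) : ZMod (m * g₁ * g₂)) = phi (m * g₁) g₂ ((k * g₁ : ℕ) : ZMod (m * g₁))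
      rw [phi_natCast]; congr 1; ring
    rw [hRA, add_assoc, ← Multiset.map_add]
    have hT'csr : IsCSR (m * g₁) (m' * g₁)
        (blockElems (B' j) + (Multiset.range m').map (fun k => ((k * g₁ : ℕ) : ZMod (m * g₁)))) := by
      have := hB'csr j
      rwa [hdivs2, hdivs1] at this
    have hScsr : IsCSR (m * g₁) (m' * g₁)
        ((Multiset.range (m' * g₁)).map (fun k : ℕ => (k : ZMod (m * g₁)))) :=
      isCSR_range he₁dvd he₁0
    have hgoal := csr_phi_count (n₁ := m * g₁) hg₂0 he₁dvd _ hT'csr x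
    have hhyp0 := hBcsr j x
    rw [hdivs2, hdivs3] at hhyp0
    have hSmap : (Multiset.range (m' * g₁)).map
          (fun k => ((k * g₂ : ℕ) : ZMod (m * g₁ * g₂))) =
        ((Multiset.range (m' * g₁)).map (fun k : ℕ => (k : ZMod (m * g₁)))).map (phi (m * g₁) g₂) := by
      rw [Multiset.map_map]
      apply Multiset.map_congr rfl
      intro k _
      show ((k * g₂ : ℕ) : ZMod (m * g₁ * g₂)) = phi (m * g₁) g₂ ((k : ℕ) : ZMod (m * g₁))
      rw [phi_natCast]
    rw [hSmap] at hhyp0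
    have hhyp1 := csr_phi_count (n₁ := m * g₁) hg₂0 he₁dvd _ hScsr x
    rw [Multiset.filter_add, Multiset.card_add] at hhyp0 ⊢
    rw [hgoal]
    rw [hhyp1] at hhyp0
    omega
end

section
/- Suppose s | g and there exists a (g, {K₀,…,K_{M−1}}, 1)-BNCDP of size u, say B = {B₀,…,B_{M−1}}, such that for each j the set of all elements of the base blocks of B_j is a complete system of representatives for the cosets of sZ_g in Z_g. Then there exists a partition-type (g, {K₀,…,K_{M−1}}, g/s)-BNCDP of size gu/s, say D, such that d_i^D ≥ is for all 1 ≤ i ≤ g/s. -/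
open scoped Classical

/-- The base blocks of `B` partition `Z_n`. -/
def IsPartitionType {n u : ℕ} (B : Fin u → Finset (ZMod n)) : Prop :=
  (∀ i i' : Fin u, i ≠ i' → Disjoint (B i) (B i')) ∧ ∀ x : ZMod n, ∃ i, x ∈ B i

/-- The `i`-apart difference list `Δ_i` of the finite set `D ⊆ Z_n`, listed in
increasing order of least nonnegative residues, indices taken cyclically and the
differences `a_{k+i} − a_k` taken as least positive residues modulo `n`
(a zero difference counts as `n`). -/
def cyclicDiffs (n i : ℕ) (D : Finset (ZMod n)) : Multiset ℕ :=
  let L := (D.val.map ZMod.val).sort (· ≤ ·)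
  (Multiset.range L.length).map (fun k =>
    let d := (L.getD ((k + i) % L.length) 0 + n - L.getD k 0) % n
    if d = 0 then n else d)

/-- `D_{(j,j')}(τ) = {a : (a, a+τ) ∈ B_i^j × B_i^{j'} for some i}`. -/
def DSet {n M u : ℕ} (B : Fin M → Fin u → Finset (ZMod n)) (j j' : Fin M)
    (τ : ZMod n) : Finset (ZMod n) :=
  Finset.univ.biUnion fun i : Fin u => (B j i).filter (fun a => a + τ ∈ B j' i)

/-- `d_i^B ≥ bound`: the minimum of `{n} ∪ Δ_i(D_{(j,j')}(τ))` over all pairs `(j,j')`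
(with `τ ≠ 0` required when `j = j'`) is at least `bound`. -/
def DBound {n M u : ℕ} (B : Fin M → Fin u → Finset (ZMod n)) (i bound : ℕ) : Prop :=
  bound ≤ n ∧ ∀ j j' : Fin M, ∀ τ : ZMod n, (j = j' → τ ≠ 0) →
    ∀ z ∈ cyclicDiffs n i (DSet B j j' τ), bound ≤ z

/-!
Translate every base block of `B_j` by every element of `s·Z_g`. The points of `B_j` represent
each coset of `s·Z_g` exactly once, so the `g / s` translates of its blocks partition `Z_g`, and
translation multiplies every difference multiplicity by `g / s`. Since `λ = 1`, a shift `τ` is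
realised by at most one pair `(a, a + τ)` inside a common block of `B`, so for the new family
`D_{(j,j')}(τ)` is empty or the single coset `a + s·Z_g`, whose `i`-apart cyclic gaps all
equal `i s`.
-/

open Finset

lemma isPartitionType_of_count_sum_eq_one {n N : ℕ} {D : Fin N → Finset (ZMod n)}
    (h : ∀ x, (∑ k, (D k).val).count x = 1) : IsPartitionType D := by
  have hunique (x : ZMod n) : ∃ k, univ.filter (fun k => x ∈ D k) = {k} := by
    rw [← card_eq_one, ← h x, Multiset.count_sum', card_filter]
    simp [Multiset.count_eq_of_nodup (D _).nodup]
  have hmem (x : ZMod n) (k : Fin N) : x ∈ D k ↔ k ∈ univ.filter (fun k => x ∈ D k) := by simp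
  refine ⟨fun k k' hkk' => disjoint_left.2 fun x hx hx' => hkk' ?_, fun x => ?_⟩
  · obtain ⟨l, hl⟩ := hunique x
    rw [hmem, hl, mem_singleton] at hx hx'
    exact hx.trans hx'.symm
  · obtain ⟨l, hl⟩ := hunique x
    exact ⟨l, (hmem x l).2 (hl ▸ mem_singleton_self l)⟩

section Translates

variable {n u m N : ℕ}

def translates (B : Fin u → Finset (ZMod n)) (c : Fin m → ZMod n) (e : Fin N ≃ Fin u × Fin m)
    (k : Fin N) : Finset (ZMod n) :=
  (B (e k).1).map (addRightEmbedding (c (e k).2))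

lemma sum_equiv_prod {β : Type*} [AddCommMonoid β] (e : Fin N ≃ Fin u × Fin m)
    (f : Fin u → Fin m → β) : ∑ k, f (e k).1 (e k).2 = ∑ i, ∑ t, f i t :=
  (e.sum_comp fun p => f p.1 p.2).trans (Fintype.sum_prod_type _)

lemma offDiag_diffs_map_addRight (A : Finset (ZMod n)) (c : ZMod n) :
    ((A.map (addRightEmbedding c) ×ˢ A.map (addRightEmbedding c)).filter
        (fun p => p.1 ≠ p.2)).val.map (fun p => p.1 - p.2)
      = ((A ×ˢ A).filter (fun p => p.1 ≠ p.2)).val.map (fun p => p.1 - p.2) := by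
  simp [← prodMap_map_product, filter_map, Function.comp_def]

lemma product_diffs_map_addRight (A C : Finset (ZMod n)) (c : ZMod n) :
    (A.map (addRightEmbedding c) ×ˢ C.map (addRightEmbedding c)).val.map (fun p => p.2 - p.1)
      = (A ×ˢ C).val.map (fun p => p.2 - p.1) := by
  simp [← prodMap_map_product]

variable (c : Fin m → ZMod n) (e : Fin N ≃ Fin u × Fin m)

lemma deltaList_translates (B : Fin u → Finset (ZMod n)) :
    deltaList (translates B c e) = m • deltaList B := by
  simp only [deltaList, translates, offDiag_diffs_map_addRight]
  rw [sum_equiv_prod e (fun i _ => ((B i ×ˢ B i).filter (fun p => p.1 ≠ p.2)).val.map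
    (fun p => p.1 - p.2))]
  simp [Finset.smul_sum]

lemma deltaE_translates (B B' : Fin u → Finset (ZMod n)) :
    deltaE (translates B c e) (translates B' c e) = m • deltaE B B' := by
  simp only [deltaE, translates, product_diffs_map_addRight]
  rw [sum_equiv_prod e (fun i _ => (B i ×ˢ B' i).val.map (fun p => p.2 - p.1))]
  simp [Finset.smul_sum]

lemma count_sum_translates (B : Fin u → Finset (ZMod n)) (x : ZMod n) :
    (∑ k, (translates B c e k).val).count x = ∑ t, (blockElems B).count (x - c t) := by
  simp only [Multiset.count_sum', translates, map_val, addRightEmbedding_apply]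
  rw [sum_equiv_prod e (fun i t => ((B i).val.map (· + c t)).count x), Finset.sum_comm]
  have hcount (A : Finset (ZMod n)) (a : ZMod n) :
      (A.val.map (· + a)).count x = A.val.count (x - a) := by
    simpa using Multiset.count_map_eq_count' (· + a) A.val (add_left_injective a) (x - a)
  simp [blockElems, Multiset.count_sum', hcount]

lemma isBNCDP_translates {M lam : ℕ} {K : Fin M → Set ℕ}
    {B : Fin M → Fin u → Finset (ZMod n)} (hB : IsBNCDP n M u lam K B) :
    IsBNCDP n M N (m * lam) K (fun j => translates (B j) c e) := by
  refine ⟨fun j => ⟨fun k => ?_, fun x hx => ?_⟩, fun j j' hjj' x => ?_⟩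
  · simpa [translates] using (hB.1 j).1 (e k).1
  · rw [deltaList_translates, Multiset.count_nsmul]
    exact Nat.mul_le_mul_left m ((hB.1 j).2 x hx)
  · rw [deltaE_translates, Multiset.count_nsmul]
    exact Nat.mul_le_mul_left m (hB.2 j j' hjj' x)

lemma DSet_translates {M : ℕ} (B : Fin M → Fin u → Finset (ZMod n)) (j j' : Fin M)
    (τ : ZMod n) : DSet (fun j => translates (B j) c e) j j' τ
      = (DSet B j j' τ).biUnion fun a => univ.image fun t => a + c t := by
  ext x
  simp only [DSet, translates, mem_biUnion, mem_filter, mem_univ, true_and, mem_image,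
    mem_map, addRightEmbedding_apply]
  constructor
  · rintro ⟨k, ⟨a, ha, rfl⟩, ⟨b, hb, hab⟩⟩
    rw [add_right_comm, add_left_inj] at hab
    subst hab
    exact ⟨a, ⟨(e k).1, ha, hb⟩, (e k).2, rfl⟩
  · rintro ⟨a, ⟨i, ha, haτ⟩, t, rfl⟩
    refine ⟨e.symm (i, t), ⟨a, by simpa using ha⟩, ⟨a + τ, by simpa using haτ, ?_⟩⟩
    simp [add_right_comm]

end Translates

section DifferenceCounts

variable {n u M : ℕ}

lemma card_filter_add_mem_le_count_diffs (A C : Finset (ZMod n)) (τ : ZMod n) :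
    (A.filter fun a => a + τ ∈ C).card ≤ ((A ×ˢ C).val.map fun p => p.2 - p.1).count τ := by
  rw [Multiset.count_map, ← filter_val, card_val]
  refine card_le_card_of_injOn (fun a => (a, a + τ)) (fun a ha => ?_) fun a _ b _ hab => ?_
  · simp_all
  · simpa using hab

lemma card_filter_add_mem_le_count_offDiag_diffs (A : Finset (ZMod n)) {τ : ZMod n}
    (hτ : τ ≠ 0) : (A.filter fun a => a + τ ∈ A).card
      ≤ (((A ×ˢ A).filter fun p => p.1 ≠ p.2).val.map fun p => p.1 - p.2).count τ := by
  rw [Multiset.count_map, ← filter_val, card_val]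
  refine card_le_card_of_injOn (fun a => (a + τ, a)) (fun a ha => ?_) fun a _ b _ hab => ?_
  · simp_all
  · simpa using hab

lemma card_DSet_le_count_deltaE (B : Fin M → Fin u → Finset (ZMod n)) (j j' : Fin M)
    (τ : ZMod n) : (DSet B j j' τ).card ≤ (deltaE (B j) (B j')).count τ := by
  rw [deltaE, Multiset.count_sum']
  exact card_biUnion_le.trans (sum_le_sum fun i _ => card_filter_add_mem_le_count_diffs _ _ τ)

lemma card_DSet_self_le_count_deltaList (B : Fin M → Fin u → Finset (ZMod n)) (j : Fin M)
    {τ : ZMod n} (hτ : τ ≠ 0) : (DSet B j j τ).card ≤ (deltaList (B j)).count τ := by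
  rw [deltaList, Multiset.count_sum']
  exact card_biUnion_le.trans
    (sum_le_sum fun i _ => card_filter_add_mem_le_count_offDiag_diffs _ hτ)

lemma card_DSet_le_one {K : Fin M → Set ℕ} {B : Fin M → Fin u → Finset (ZMod n)}
    (hB : IsBNCDP n M u 1 K B) {j j' : Fin M} {τ : ZMod n} (hτ : j = j' → τ ≠ 0) :
    (DSet B j j' τ).card ≤ 1 := by
  by_cases hjj' : j = j'
  · subst hjj'
    exact (card_DSet_self_le_count_deltaList B j (hτ rfl)).trans ((hB.1 j).2 τ (hτ rfl))
  · exact (card_DSet_le_count_deltaE B j j' τ).trans (hB.2 j j' hjj' τ)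

end DifferenceCounts

section Multiples

def multiplesEnum (g s : ℕ) (t : Fin (g / s)) : ZMod g := ((s * t : ℕ) : ZMod g)

variable {g s : ℕ} [NeZero g]

lemma castHom_eq_zero_iff_dvd_val (hsg : s ∣ g) (z : ZMod g) :
    ZMod.castHom hsg (ZMod s) z = 0 ↔ s ∣ z.val := by
  rw [ZMod.castHom_apply, ZMod.cast_eq_val, ZMod.natCast_eq_zero_iff]

lemma inSub_iff_dvd_val_s1 (hsg : s ∣ g) (z : ZMod g) : inSub g s z ↔ s ∣ z.val := by
  rw [← castHom_eq_zero_iff_dvd_val hsg]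
  constructor
  · rintro ⟨w, rfl⟩
    rw [map_mul, map_natCast, ZMod.natCast_self, zero_mul]
  · intro h
    obtain ⟨q, hq⟩ := (castHom_eq_zero_iff_dvd_val hsg z).1 h
    exact ⟨q, by rw [← ZMod.natCast_zmod_val z, hq]; push_cast; rfl⟩

lemma val_mod_eq_val_mod_iff (hsg : s ∣ g) (x y : ZMod g) :
    x.val % s = y.val % s ↔ inSub g s (x - y) := by
  rw [inSub_iff_dvd_val_s1 hsg, ← castHom_eq_zero_iff_dvd_val hsg, map_sub, sub_eq_zero,
    ZMod.castHom_apply, ZMod.castHom_apply, ZMod.cast_eq_val, ZMod.cast_eq_val,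
    ZMod.natCast_eq_natCast_iff']

lemma multiplesEnum_injective (hsg : s ∣ g) : Function.Injective (multiplesEnum g s) := by
  intro t t' h
  have hlt (t : Fin (g / s)) : s * t < g := (Nat.lt_div_iff_mul_lt' hsg _).1 t.2
  have hval := congrArg ZMod.val h
  simp only [multiplesEnum, ZMod.val_natCast, Nat.mod_eq_of_lt (hlt t),
    Nat.mod_eq_of_lt (hlt t')] at hval
  exact Fin.ext (Nat.eq_of_mul_eq_mul_left (Nat.pos_of_dvd_of_pos hsg (NeZero.pos g)) hval)

lemma exists_multiplesEnum_eq_iff (hsg : s ∣ g) (y : ZMod g) :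
    (∃ t, multiplesEnum g s t = y) ↔ inSub g s y := by
  refine ⟨fun ⟨t, ht⟩ => ⟨t, by rw [← ht, multiplesEnum]; push_cast; rfl⟩,
    fun h => ?_⟩
  obtain ⟨q, hq⟩ := (inSub_iff_dvd_val_s1 hsg y).1 h
  refine ⟨⟨q, (Nat.lt_div_iff_mul_lt' hsg q).2 (hq ▸ y.val_lt)⟩, ?_⟩
  rw [multiplesEnum, ← hq, ZMod.natCast_zmod_val]

lemma sum_count_sub_multiplesEnum (hsg : s ∣ g) (T : Multiset (ZMod g)) (x : ZMod g) :
    ∑ t, T.count (x - multiplesEnum g s t) = (T.filter fun b => inSub g s (x - b)).card := by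
  have himage : univ.image (fun t => x - multiplesEnum g s t)
      = univ.filter fun b => inSub g s (x - b) := by
    ext b
    simp [← exists_multiplesEnum_eq_iff hsg, eq_sub_iff_add_eq, add_comm, eq_comm]
  rw [← sum_image (f := T.count) fun t _ t' _ h =>
      multiplesEnum_injective hsg (sub_right_injective h), himage, sum_filter,
    ← Multiset.sum_count_eq_card (s := univ) fun b _ => mem_univ b]
  simp [Multiset.count_filter]

lemma image_add_multiplesEnum (hsg : s ∣ g) (a : ZMod g) :
    univ.image (fun t => a + multiplesEnum g s t)
      = univ.filter fun x => x.val % s = a.val % s := by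
  ext x
  simp [val_mod_eq_val_mod_iff hsg, ← exists_multiplesEnum_eq_iff hsg, eq_sub_iff_add_eq,
    add_comm]

end Multiples

section CyclicGaps

variable {g s r : ℕ} [NeZero g]

lemma val_filter_val_mod_eq (hsg : s ∣ g) (hr : r < s) :
    (univ.filter fun x : ZMod g => x.val % s = r).val.map ZMod.val
      = ((List.range (g / s)).map fun k => r + s * k : Multiset ℕ) := by
  have hs := Nat.pos_of_dvd_of_pos hsg (NeZero.pos g)
  have hinj : Function.Injective fun k => r + s * k :=
    fun a b h => Nat.eq_of_mul_eq_mul_left hs (Nat.add_left_cancel h)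
  refine (Multiset.Nodup.ext ((nodup _).map (ZMod.val_injective g))
    (Multiset.coe_nodup.2 (List.nodup_range.map hinj))).2 fun b => ?_
  simp only [Multiset.mem_map, mem_val, mem_filter, mem_univ, true_and, Multiset.mem_coe,
    List.mem_map, List.mem_range]
  constructor
  · rintro ⟨x, hx, rfl⟩
    refine ⟨x.val / s,
      (Nat.lt_div_iff_mul_lt' hsg _).2 ((Nat.mul_div_le _ _).trans_lt x.val_lt), ?_⟩
    rw [← hx, Nat.mod_add_div]
  · rintro ⟨k, hk, rfl⟩
    have hlt : r + s * k < g := by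
      have := Nat.mul_le_mul_left s (Nat.succ_le_of_lt hk)
      rw [Nat.mul_div_cancel' hsg, Nat.mul_succ] at this
      omega
    refine ⟨(r + s * k : ℕ), ?_, ?_⟩
    · rw [ZMod.val_natCast, Nat.mod_eq_of_lt hlt, Nat.add_mul_mod_self_left, Nat.mod_eq_of_lt hr]
    · rw [ZMod.val_natCast, Nat.mod_eq_of_lt hlt]

lemma sort_val_filter_val_mod_eq (hsg : s ∣ g) (hr : r < s) :
    ((univ.filter fun x : ZMod g => x.val % s = r).val.map ZMod.val).sort (· ≤ ·)
      = (List.range (g / s)).map fun k => r + s * k := by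
  rw [val_filter_val_mod_eq hsg hr, Multiset.coe_sort, List.mergeSort_eq_self]
  exact List.pairwise_le_range.map _ fun a b hab => by gcongr

lemma cyclic_gap_of_progression {g m s r i k : ℕ} (hg : s * m = g) (hs : 0 < s) (hk : k < m)
    (hi : 1 ≤ i) (him : i ≤ m) :
    (if (r + s * ((k + i) % m) + g - (r + s * k)) % g = 0 then g
      else (r + s * ((k + i) % m) + g - (r + s * k)) % g) = i * s := by
  subst hg
  have hsi : s * i ≤ s * m := Nat.mul_le_mul_left s him
  have hnum : (r + s * ((k + i) % m) + s * m - (r + s * k)) % (s * m) = s * i % (s * m) := by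
    rcases lt_or_ge (k + i) m with h | h
    · rw [Nat.mod_eq_of_lt h, mul_add, show r + (s * k + s * i) + s * m - (r + s * k)
        = s * i + s * m by omega, Nat.add_mod_right]
    · have hwrap : (k + i) % m + m = k + i := by
        rw [Nat.mod_eq_sub_mod h, Nat.mod_eq_of_lt (by omega)]
        omega
      have hwrap' := congrArg (s * ·) hwrap
      simp only [mul_add] at hwrap'
      rw [show r + s * ((k + i) % m) + s * m - (r + s * k) = s * i by omega]
  rw [hnum, mul_comm i s]
  rcases hsi.lt_or_eq with h | h
  · rw [Nat.mod_eq_of_lt h, if_neg (Nat.mul_pos hs hi).ne']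
  · rw [h, Nat.mod_self, if_pos rfl]

lemma eq_of_mem_cyclicDiffs_filter_val_mod (hsg : s ∣ g) (hr : r < s) {i z : ℕ} (hi : 1 ≤ i)
    (him : i ≤ g / s) (hz : z ∈ cyclicDiffs g i (univ.filter fun x : ZMod g => x.val % s = r)) :
    z = i * s := by
  simp only [cyclicDiffs, sort_val_filter_val_mod_eq hsg hr, Multiset.mem_map, Multiset.mem_range,
    List.length_map, List.length_range] at hz
  obtain ⟨k, hk, rfl⟩ := hz
  simp only [List.getD_eq_getElem?_getD, List.length_map, List.length_range,
    Nat.mod_lt _ (Nat.zero_lt_of_lt hk), getElem?_pos, List.getElem_map, List.getElem_range,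
    Option.getD_some, hk]
  exact cyclic_gap_of_progression (Nat.mul_div_cancel' hsg)
    (Nat.pos_of_dvd_of_pos hsg (NeZero.pos g)) hk hi him

end CyclicGaps

section Construction

variable {g s M u N : ℕ} [NeZero g]

lemma isPartitionType_translates_multiplesEnum (hsg : s ∣ g) {B : Fin u → Finset (ZMod g)}
    (hB : IsCSR g s (blockElems B)) (e : Fin N ≃ Fin u × Fin (g / s)) :
    IsPartitionType (translates B (multiplesEnum g s) e) :=
  isPartitionType_of_count_sum_eq_one fun x => by
    rw [count_sum_translates, sum_count_sub_multiplesEnum hsg]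
    exact hB x

lemma dBound_translates_multiplesEnum (hsg : s ∣ g) {K : Fin M → Set ℕ}
    {B : Fin M → Fin u → Finset (ZMod g)} (hB : IsBNCDP g M u 1 K B)
    (e : Fin N ≃ Fin u × Fin (g / s)) {i : ℕ} (hi : 1 ≤ i) (him : i ≤ g / s) :
    DBound (fun j => translates (B j) (multiplesEnum g s) e) i (i * s) := by
  have hs := Nat.pos_of_dvd_of_pos hsg (NeZero.pos g)
  refine ⟨(Nat.le_div_iff_mul_le hs).1 him, fun j j' τ hτ z hz => ?_⟩
  rw [DSet_translates] at hz
  obtain ⟨a, ha⟩ := card_le_one_iff_subset_singleton.1 (card_DSet_le_one hB hτ)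
  rcases subset_singleton_iff.1 ha with hempty | hsingle
  · simp [hempty, cyclicDiffs] at hz
  · rw [hsingle, singleton_biUnion, image_add_multiplesEnum hsg] at hz
    exact (eq_of_mem_cyclicDiffs_filter_val_mod hsg (Nat.mod_lt _ hs) hi him hz).ge

end Construction

theorem stmt1_general (g s M u : ℕ) (hg : 0 < g) (hsg : s ∣ g)
    (K : Fin M → Set ℕ) (B : Fin M → Fin u → Finset (ZMod g))
    (hB : IsBNCDP g M u 1 K B)
    (hCSR : ∀ j, IsCSR g s (blockElems (B j))) :
    ∃ D : Fin M → Fin (g * u / s) → Finset (ZMod g),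
      (∀ j, IsPartitionType (D j)) ∧
      IsBNCDP g M (g * u / s) (g / s) K D ∧
      ∀ i : ℕ, 1 ≤ i → i ≤ g / s → DBound D i (i * s) := by
  have : NeZero g := ⟨hg.ne'⟩
  have hN : g * u / s = u * (g / s) := by rw [mul_comm, Nat.mul_div_assoc u hsg]
  let e : Fin (g * u / s) ≃ Fin u × Fin (g / s) := (finCongr hN).trans finProdFinEquiv.symm
  refine ⟨fun j => translates (B j) (multiplesEnum g s) e,
    fun j => isPartitionType_translates_multiplesEnum hsg (hCSR j) e, ?_,
    fun i hi him => dBound_translates_multiplesEnum hsg hB e hi him⟩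
  simpa using isBNCDP_translates (multiplesEnum g s) e hB

theorem stmt1 (g s M u : ℕ) (hg : 0 < g) (hs : 0 < s) (hsg : s ∣ g)
    (K : Fin M → Set ℕ) (B : Fin M → Fin u → Finset (ZMod g))
    (hB : IsBNCDP g M u 1 K B)
    (hCSR : ∀ j, IsCSR g s (blockElems (B j))) :
    ∃ D : Fin M → Fin (g * u / s) → Finset (ZMod g),
      (∀ j, IsPartitionType (D j)) ∧
      IsBNCDP g M (g * u / s) (g / s) K D ∧
      ∀ i : ℕ, 1 ≤ i → i ≤ g / s → DBound D i (i * s) :=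
  stmt1_general g s M u hg hsg K B hB hCSR
end

section
/- Let p be a prime and let m be an integer with m > 1. Then there exist sets K₀,…,K_{p^{m−1}−1}, each contained in {p, p−1}, and a (p(p^m−1), {K₀,…,K_{p^{m−1}−1}}, 1)-BNCDP of size p^{m−1} over Z_{p(p^m−1)} such that for each of the p^{m−1} CDPs, the set of all elements of its base blocks is a complete system of representatives for the cosets of (p^m−1)·Z_{p(p^m−1)} in Z_{p(p^m−1)}. -/
open scoped Classical

/-!
Put `q = p ^ m`, `F = 𝔽_q`, and identify `ℤ_{p(q-1)}` with `𝔽_p × F^*` by the Chinese remainder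
theorem and a discrete logarithm. Fix an `𝔽_p`-linear functional `ψ : F → 𝔽_p` with `ψ 1 = 1`; its
kernel `K` is a complement of `𝔽_p` and has `p ^ (m - 1)` elements. For `t, s ∈ K` the block
`B(t, s)` is the set of points `(ψ((1 + t) x), x)` with `x ∈ F^*` and `(1 + t) x + t ∈ s + 𝔽_p`.
Being an affine `𝔽_p`-line pulled back to `F^*`, it has `p` elements, or `p - 1` when it passes
through `0`, i.e. when `s = t`; and the second coordinates of the family `(B(t, s))_s` run through
`F^*` exactly once.

The difference of `(ψ((1 + t) x), x) ∈ B(t, s)` and `(ψ((1 + t') y), y) ∈ B(t', s)` records `y / x`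
and `ψ w` for `w = (1 + t') y - (1 + t) x`, while `w ≡ t - t'` modulo `𝔽_p`. So the difference
determines `w`, and together with `y / x` also `x` and `y`, as soon as `w ≠ 0`: for `t = t'`
this holds because `x ≠ y`, and for `t ≠ t'` because `w ∉ 𝔽_p`.
-/

open Finset

section Counting

lemma Multiset.count_sum_map_le_one {ι α β : Type*} [Fintype ι] [DecidableEq β]
    (T : ι → Finset α) (f : α → β)
    (hf : ∀ i i' a a', a ∈ T i → a' ∈ T i' → f a = f a' → i = i' ∧ a = a') (z : β) :
    (∑ i, (T i).val.map f).count z ≤ 1 := by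
  simp only [Multiset.count_sum', Multiset.count_map, ← filter_val, card_val]
  rw [← Finset.card_sigma]
  refine Finset.card_le_one.mpr fun ⟨i, a⟩ ha ⟨i', a'⟩ ha' => ?_
  simp only [Finset.mem_sigma, Finset.mem_univ, Finset.mem_filter, true_and] at ha ha'
  obtain ⟨rfl, rfl⟩ := hf i i' a a' ha.1 ha'.1 (ha.2.symm.trans ha'.2)
  rfl

variable {X : Type*} [Fintype X] {n u : ℕ}

def fiberBlocks (σ : X → Fin u) (θ : X ↪ ZMod n) (i : Fin u) : Finset (ZMod n) :=
  ({x | σ x = i} : Finset X).map θ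

lemma mem_fiberBlocks {σ : X → Fin u} {θ : X ↪ ZMod n} {i : Fin u} {a : ZMod n} :
    a ∈ fiberBlocks σ θ i ↔ ∃ x, σ x = i ∧ θ x = a := by
  simp [fiberBlocks]

lemma card_fiberBlocks (σ : X → Fin u) (θ : X ↪ ZMod n) (i : Fin u) :
    (fiberBlocks σ θ i).card = #{x | σ x = i} :=
  card_map _

lemma blockElems_fiberBlocks (σ : X → Fin u) (θ : X ↪ ZMod n) :
    blockElems (fiberBlocks σ θ) = (univ : Finset X).val.map θ := by
  have hfibers : ∑ i, ({x | σ x = i} : Finset X).val = univ.val :=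
    Multiset.ext' fun x => by simp [Multiset.count_sum', Multiset.count_filter]
  simp only [blockElems, fiberBlocks, map_val]
  rw [← hfibers]
  exact (map_sum (Multiset.mapAddMonoidHom θ) _ _).symm

lemma count_deltaList_fiberBlocks_le_one (σ : X → Fin u) (θ : X ↪ ZMod n)
    (h : ∀ x y x' y', σ x = σ y → σ x' = σ y' → x ≠ y → θ x - θ y = θ x' - θ y' →
      x = x' ∧ y = y') (z : ZMod n) :
    (deltaList (fiberBlocks σ θ)).count z ≤ 1 := by
  rw [deltaList]
  apply Multiset.count_sum_map_le_one
  rintro i i' ⟨a, b⟩ ⟨a', b'⟩ hab hab' heq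
  simp only [mem_filter, mem_product, mem_fiberBlocks] at hab hab'
  obtain ⟨⟨⟨x, rfl, rfl⟩, ⟨y, hy, rfl⟩⟩, hxy⟩ := hab
  obtain ⟨⟨⟨x', rfl, rfl⟩, ⟨y', hy', rfl⟩⟩, -⟩ := hab'
  obtain ⟨rfl, rfl⟩ := h x y x' y' hy.symm hy'.symm (ne_of_apply_ne θ hxy) heq
  exact ⟨rfl, rfl⟩

lemma count_deltaE_fiberBlocks_le_one (σ σ' : X → Fin u) (θ θ' : X ↪ ZMod n)
    (h : ∀ x y x' y', σ x = σ' y → σ x' = σ' y' → θ' y - θ x = θ' y' - θ x' →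
      x = x' ∧ y = y') (z : ZMod n) :
    (deltaE (fiberBlocks σ θ) (fiberBlocks σ' θ')).count z ≤ 1 := by
  rw [deltaE]
  apply Multiset.count_sum_map_le_one
  rintro i i' ⟨a, b⟩ ⟨a', b'⟩ hab hab' heq
  simp only [mem_product, mem_fiberBlocks] at hab hab'
  obtain ⟨⟨x, rfl, rfl⟩, ⟨y, hy, rfl⟩⟩ := hab
  obtain ⟨⟨x', rfl, rfl⟩, ⟨y', hy', rfl⟩⟩ := hab'
  obtain ⟨rfl, rfl⟩ := h x y x' y' hy.symm hy'.symm heq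
  exact ⟨rfl, rfl⟩

lemma isCSR_fiberBlocks {d : ℕ} (σ : X → Fin u) (θ : X ↪ ZMod n)
    (h : ∀ z, ∃! x, inSub n d (z - θ x)) : IsCSR n d (blockElems (fiberBlocks σ θ)) := by
  intro z
  rw [blockElems_fiberBlocks, Multiset.filter_map, Multiset.card_map]
  exact (Fintype.existsUnique_iff_card_one _).mp (h z)

end Counting

noncomputable def ZMod.addEquivProdAdditive {p N : ℕ} {G : Type*} [Group G] [IsCyclic G]
    (hG : Nat.card G = N) (hcop : p.Coprime N) : ZMod (p * N) ≃+ ZMod p × Additive G :=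
  (ZMod.chineseRemainder hcop).toAddEquiv.trans <| AddEquiv.prodCongr (AddEquiv.refl _) <|
    (ZMod.ringEquivCongr hG.symm).toAddEquiv.trans <|
      zmodAddCyclicAddEquiv (isAddCyclic_additive_iff.2 ‹_›)

lemma inSub_iff_snd_eq_zero {p N : ℕ} {G : Type*} [AddCommGroup G] (hG : Nat.card G = N)
    (hcop : p.Coprime N) (E : ZMod (p * N) ≃+ ZMod p × G) (w : ZMod (p * N)) :
    inSub (p * N) N w ↔ (E w).2 = 0 := by
  subst hG
  constructor
  · rintro ⟨y, rfl⟩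
    rw [← nsmul_eq_mul, map_nsmul, Prod.smul_snd, card_nsmul_eq_zero']
  · intro h
    let u := ZMod.unitOfCoprime _ hcop.symm
    refine ⟨E.symm ((u⁻¹ : (ZMod p)ˣ) * (E w).1, 0), E.injective ?_⟩
    rw [← nsmul_eq_mul, map_nsmul, E.apply_symm_apply]
    ext
    · rw [Prod.smul_fst, nsmul_eq_mul, ← ZMod.coe_unitOfCoprime _ hcop.symm,
        Units.mul_inv_cancel_left]
    · rw [Prod.smul_snd, h, nsmul_zero]

lemma eq_and_eq_of_sub_eq_of_mul_eq {F : Type*} [Field F] {a b x y x' y' : F} (hx : x ≠ 0)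
    (hratio : y * x' = y' * x) (h : b * y - a * x = b * y' - a * x')
    (hne : b * y - a * x ≠ 0) : x = x' ∧ y = y' := by
  have hxx : (b * y - a * x) * (x' - x) = 0 := by linear_combination b * hratio - x * h
  have hx' : x = x' := (sub_eq_zero.mp ((mul_eq_zero.mp hxx).resolve_left hne)).symm
  subst hx'
  exact ⟨rfl, mul_right_cancel₀ hx hratio⟩

lemma card_units_filter_mul_add {F : Type*} [Field F] [Fintype F] {v : F} (hv : v ≠ 0)
    (t : F) (P : F → Prop) [DecidablePred P] :
    #{x : Fˣ | P (v * x + t)} = #{z : F | z ≠ t ∧ P z} := by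
  refine card_bij (fun x _ => v * x + t) (fun x hx => ?_) (fun x _ y _ hxy => ?_) fun z hz => ?_
  · simp only [mem_filter, mem_univ, true_and] at hx ⊢
    exact ⟨by simp [hv], hx⟩
  · exact Units.ext (by simpa [hv] using hxy)
  · simp only [mem_filter, mem_univ, true_and] at hz ⊢
    have hz' : v⁻¹ * (z - t) ≠ 0 := by simp [hv, sub_eq_zero, hz.1]
    have hvz : v * (v⁻¹ * (z - t)) + t = z := by field_simp; ring
    exact ⟨Units.mk0 _ hz', by simpa [hvz] using hz.2, hvz⟩

section FiniteField

variable {p : ℕ} {F : Type*} [Field F] [Algebra (ZMod p) F] (ψ : F →ₗ[ZMod p] ZMod p)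

lemma one_add_ne_zero_of_mem_ker [Fact p.Prime] (hψ : ψ 1 = 1) (t : LinearMap.ker ψ) :
    1 + (t : F) ≠ 0 :=
  fun h0 => by simpa [hψ, LinearMap.mem_ker.mp t.2] using congrArg ψ h0

lemma card_eq_card_ker_mul (hψ : ψ 1 = 1) : Nat.card F = Nat.card (LinearMap.ker ψ) * p := by
  have hsurj : Function.Surjective ψ := fun c => ⟨c • 1, by simp [hψ]⟩
  rw [Submodule.card_eq_card_quotient_mul_card (LinearMap.ker ψ),
    Nat.card_congr (ψ.quotKerEquivOfSurjective hsurj).toEquiv, Nat.card_zmod]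

variable (hψ : ψ 1 = 1)

def projKer : F →ₗ[ZMod p] LinearMap.ker ψ :=
  LinearMap.codRestrict _ (LinearMap.id - LinearMap.smulRight ψ 1) fun z => by simp [hψ]

lemma coe_projKer (z : F) : (projKer ψ hψ z : F) = z - ψ z • 1 := rfl

lemma projKer_coe (s : LinearMap.ker ψ) : projKer ψ hψ s = s := by
  ext
  simp [coe_projKer, LinearMap.mem_ker.mp s.2]

lemma eq_of_projKer_eq {z z' : F} (h : ψ z = ψ z') (h' : projKer ψ hψ z = projKer ψ hψ z') :
    z = z' := by
  simpa [coe_projKer, h] using congrArg Subtype.val h'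

lemma card_projKer_fiber [Fact p.Prime] [Fintype F] (s : LinearMap.ker ψ) :
    #{z : F | projKer ψ hψ z = s} = p := by
  have hinj : Function.Injective fun c : ZMod p => c • (1 : F) + s := fun c c' h => by
    simpa [hψ, LinearMap.mem_ker.mp s.2] using congrArg ψ h
  have hfiber : ({z | projKer ψ hψ z = s} : Finset F) =
      univ.image fun c : ZMod p => c • (1 : F) + s := by
    ext z
    simp only [mem_filter, mem_univ, true_and, mem_image]
    constructor
    · rintro rfl
      exact ⟨ψ z, by rw [coe_projKer, add_sub_cancel]⟩
    · rintro ⟨c, rfl⟩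
      ext
      simp [coe_projKer, hψ, LinearMap.mem_ker.mp s.2]
  rw [hfiber, card_image_of_injective _ hinj, card_univ, ZMod.card]

def blockIndex (t : LinearMap.ker ψ) (x : Fˣ) : LinearMap.ker ψ :=
  projKer ψ hψ ((1 + t) * x + t)

lemma projKer_sub_eq_blockIndex_sub (s t : LinearMap.ker ψ) (x y : Fˣ) :
    projKer ψ hψ ((1 + s) * y - (1 + t) * x) =
      blockIndex ψ hψ s y - blockIndex ψ hψ t x - (s - t) := by
  have h : (1 + (s : F)) * y - (1 + t) * x =
      ((1 + s) * y + s) - ((1 + t) * x + t) - ((s - t : LinearMap.ker ψ) : F) := by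
    push_cast
    ring
  rw [h, map_sub, map_sub, projKer_coe, blockIndex, blockIndex]

lemma card_blockIndex_eq [Fact p.Prime] [Fintype F] (t s : LinearMap.ker ψ) :
    #{x : Fˣ | blockIndex ψ hψ t x = s} = if s = t then p - 1 else p := by
  have herase : ({z | z ≠ t ∧ projKer ψ hψ z = s} : Finset F) =
      ({z | projKer ψ hψ z = s} : Finset F).erase t := by
    ext
    simp
  calc #{x : Fˣ | blockIndex ψ hψ t x = s}
      = #{z : F | z ≠ t ∧ projKer ψ hψ z = s} :=
        card_units_filter_mul_add (one_add_ne_zero_of_mem_ker ψ hψ t) t (projKer ψ hψ · = s)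
    _ = if s = t then p - 1 else p := by
        rw [herase, card_erase_eq_ite, card_projKer_fiber]
        simp [projKer_coe, eq_comm]

variable {n : ℕ} (E : ZMod n ≃+ ZMod p × Additive Fˣ)

def blockEmbedding (t : F) : Fˣ ↪ ZMod n :=
  ⟨fun x => E.symm (ψ ((1 + t) * x), Additive.ofMul x), fun x y h => by
    simpa using congrArg (fun w => (E w).2) h⟩

lemma blockEmbedding_apply (t : F) (x : Fˣ) :
    blockEmbedding ψ E t x = E.symm (ψ ((1 + t) * x), Additive.ofMul x) := rfl

lemma apply_blockEmbedding_sub (s t : F) (x y : Fˣ) :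
    E (blockEmbedding ψ E s y - blockEmbedding ψ E t x) =
      (ψ ((1 + s) * y - (1 + t) * x), Additive.ofMul (y / x)) := by
  rw [map_sub, map_sub, ofMul_div, blockEmbedding_apply, blockEmbedding_apply]
  simp

lemma existsUnique_inSub_sub_blockEmbedding {N : ℕ} (hE : ∀ w, inSub n N w ↔ (E w).2 = 0)
    (t : F) (z : ZMod n) : ∃! x : Fˣ, inSub n N (z - blockEmbedding ψ E t x) := by
  simp only [hE, map_sub, blockEmbedding_apply, AddEquiv.apply_symm_apply, Prod.snd_sub,
    sub_eq_zero]
  exact ⟨Additive.toMul (E z).2, rfl, fun x hx => by rw [hx]; rfl⟩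

variable {ψ hψ}

lemma eq_of_blockEmbedding_sub_eq {s t : LinearMap.ker ψ} {x y x' y' : Fˣ}
    (hσ : blockIndex ψ hψ s y - blockIndex ψ hψ t x =
      blockIndex ψ hψ s y' - blockIndex ψ hψ t x')
    (hθ : blockEmbedding ψ E s y - blockEmbedding ψ E t x =
      blockEmbedding ψ E s y' - blockEmbedding ψ E t x')
    (hne : (1 + (s : F)) * y - (1 + t) * x ≠ 0) : x = x' ∧ y = y' := by
  obtain ⟨hψθ, hratio⟩ := Prod.ext_iff.mp <| by
    simpa only [apply_blockEmbedding_sub] using congrArg E hθ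
  have hratio' : (y : F) * x' = y' * x := by
    simpa using congrArg Units.val
      (div_eq_div_iff_mul_eq_mul.mp (Additive.ofMul.injective hratio))
  have hw : (1 + (s : F)) * y - (1 + t) * x = (1 + s) * y' - (1 + t) * x' :=
    eq_of_projKer_eq ψ hψ hψθ <| by
      rw [projKer_sub_eq_blockIndex_sub, projKer_sub_eq_blockIndex_sub, hσ]
  obtain ⟨hx, hy⟩ := eq_and_eq_of_sub_eq_of_mul_eq x.ne_zero hratio' hw hne
  exact ⟨Units.ext hx, Units.ext hy⟩

lemma eq_of_blockEmbedding_sub_eq_of_blockIndex_eq [Fact p.Prime] {t : LinearMap.ker ψ}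
    {x y x' y' : Fˣ} (h : blockIndex ψ hψ t x = blockIndex ψ hψ t y)
    (h' : blockIndex ψ hψ t x' = blockIndex ψ hψ t y') (hxy : x ≠ y)
    (hθ : blockEmbedding ψ E t x - blockEmbedding ψ E t y =
      blockEmbedding ψ E t x' - blockEmbedding ψ E t y') : x = x' ∧ y = y' :=
  And.symm <| eq_of_blockEmbedding_sub_eq E (by rw [h, h', sub_self, sub_self]) hθ <| by
    rw [← mul_sub]
    exact mul_ne_zero (one_add_ne_zero_of_mem_ker ψ hψ t)
      (sub_ne_zero.mpr (Units.val_injective.ne hxy))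

lemma eq_of_blockEmbedding_sub_eq_of_ne {s t : LinearMap.ker ψ} (hst : s ≠ t)
    {x y x' y' : Fˣ} (h : blockIndex ψ hψ t x = blockIndex ψ hψ s y)
    (h' : blockIndex ψ hψ t x' = blockIndex ψ hψ s y')
    (hθ : blockEmbedding ψ E s y - blockEmbedding ψ E t x =
      blockEmbedding ψ E s y' - blockEmbedding ψ E t x') : x = x' ∧ y = y' :=
  eq_of_blockEmbedding_sub_eq E (by rw [h, h', sub_self, sub_self]) hθ fun h0 =>
    hst <| Eq.symm <| by
      simpa [projKer_sub_eq_blockIndex_sub, h, sub_eq_zero] using congrArg (projKer ψ hψ) h0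

variable [Fintype F] {u : ℕ} (ψ hψ) (e : Fin u ≃ LinearMap.ker ψ)

noncomputable def bncdpBlocks (j : Fin u) : Fin u → Finset (ZMod n) :=
  fiberBlocks (e.symm ∘ blockIndex ψ hψ (e j)) (blockEmbedding ψ E (e j))

lemma card_bncdpBlocks_mem [Fact p.Prime] (j i : Fin u) :
    (bncdpBlocks ψ hψ E e j i).card ∈ ({p, p - 1} : Set ℕ) := by
  rw [bncdpBlocks, card_fiberBlocks]
  simp only [Function.comp_apply, Equiv.symm_apply_eq]
  rw [card_blockIndex_eq]
  split_ifs <;> simp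

lemma count_deltaList_bncdpBlocks_le_one [Fact p.Prime] (j : Fin u) (z : ZMod n) :
    (deltaList (bncdpBlocks ψ hψ E e j)).count z ≤ 1 :=
  count_deltaList_fiberBlocks_le_one _ _ (fun _ _ _ _ h h' hxy hθ =>
    eq_of_blockEmbedding_sub_eq_of_blockIndex_eq E (e.symm.injective h) (e.symm.injective h')
      hxy hθ) z

lemma count_deltaE_bncdpBlocks_le_one {j j' : Fin u} (hjj : j ≠ j') (z : ZMod n) :
    (deltaE (bncdpBlocks ψ hψ E e j) (bncdpBlocks ψ hψ E e j')).count z ≤ 1 :=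
  count_deltaE_fiberBlocks_le_one _ _ _ _ (fun _ _ _ _ h h' hθ =>
    eq_of_blockEmbedding_sub_eq_of_ne E (e.injective.ne hjj.symm) (e.symm.injective h)
      (e.symm.injective h') hθ) z

lemma isCSR_bncdpBlocks {N : ℕ} (hE : ∀ w, inSub n N w ↔ (E w).2 = 0) (j : Fin u) :
    IsCSR n N (blockElems (bncdpBlocks ψ hψ E e j)) :=
  isCSR_fiberBlocks _ _ (existsUnique_inSub_sub_blockEmbedding ψ E hE _)

end FiniteField

theorem stmt4 (p m : ℕ) (hp : p.Prime) (hm : 1 < m) :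
    ∃ K : Fin (p ^ (m - 1)) → Set ℕ,
      (∀ j, K j ⊆ {p, p - 1}) ∧
      ∃ A : Fin (p ^ (m - 1)) → Fin (p ^ (m - 1)) → Finset (ZMod (p * (p ^ m - 1))),
        IsBNCDP (p * (p ^ m - 1)) (p ^ (m - 1)) (p ^ (m - 1)) 1 K A ∧
        ∀ j, IsCSR (p * (p ^ m - 1)) (p ^ m - 1) (blockElems (A j)) := by
  have : Fact p.Prime := ⟨hp⟩
  have hm0 : m ≠ 0 := by omega
  let F := GaloisField p m
  have : Fintype F := Fintype.ofFinite F
  obtain ⟨ψ, hψ⟩ := Module.Projective.exists_dual_eq_one (ZMod p) (one_ne_zero (α := F))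
  have hcard : Nat.card F = p ^ m := GaloisField.card p m hm0
  have hunits : Nat.card Fˣ = p ^ m - 1 := by rw [Nat.card_units, hcard]
  have hcop : p.Coprime (p ^ m - 1) :=
    (((Nat.coprime_self_sub_left (Nat.one_le_pow _ _ hp.pos)).mpr (Nat.coprime_one_left _)
      ).coprime_dvd_right (dvd_pow_self p hm0)).symm
  have hker : Nat.card (LinearMap.ker ψ) = p ^ (m - 1) := by
    have h := card_eq_card_ker_mul ψ hψ
    rw [hcard, ← pow_sub_one_mul hm0] at h
    exact (Nat.eq_of_mul_eq_mul_right hp.pos h).symm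
  let E := ZMod.addEquivProdAdditive hunits hcop
  let e := (Finite.equivFinOfCardEq hker).symm
  refine ⟨fun _ => {p, p - 1}, fun _ => subset_rfl, bncdpBlocks ψ hψ E e,
    ⟨fun j => ⟨card_bncdpBlocks_mem ψ hψ E e j,
      fun z _ => count_deltaList_bncdpBlocks_le_one ψ hψ E e j z⟩,
      fun _ _ hjj => count_deltaE_bncdpBlocks_le_one ψ hψ E e hjj⟩,
    isCSR_bncdpBlocks ψ hψ E e (inSub_iff_snd_eq_zero (G := Additive Fˣ) hunits hcop E)⟩
end

section
/- Let p be a prime and let m be an integer with m > 1. Then there exists a strictly optimal (p(p^m−1), p^{m−1}, p; p^m)-FHS set; that is, there exists a set S of p^{m−1} FHSs of length n = p(p^m−1) over an alphabet of size l = p^m such that H(S;L) ≤ ⌈Lp/n⌉ for every L with 1 ≤ L ≤ n, where p = ⌈(2InM−(I+1)Il)/((nM−1)M)⌉ with M = p^{m−1} and I = ⌊nM/l⌋. -/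
/-- Partial Hamming correlation `H_{X,Y}(τ; j | L)` of the frequency hopping
sequences `X, Y : ZMod n → F` for shift `τ`, window start `j` and window length `L`. -/
def partialHC {n : ℕ} {F : Type*} [DecidableEq F] (X Y : ZMod n → F)
    (τ j : ZMod n) (L : ℕ) : ℕ :=
  ∑ t ∈ Finset.range L, if X (j + (t : ZMod n)) = Y (j + (t : ZMod n) + τ) then 1 else 0

/-- The Peng–Fan bound value `⌈(2InM − (I+1)Il) / ((nM−1)M)⌉` where `I = ⌊nM/l⌋`. -/
def pengFanBound (n M l : ℕ) : ℤ :=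
  ⌈(((2 * (n * M / l) * n * M : ℕ) : ℚ) - (((n * M / l + 1) * (n * M / l) * l : ℕ) : ℚ))
    / ((((n * M : ℕ) : ℚ) - 1) * (M : ℚ))⌉

/-- There is a strictly optimal `(n, M, λ; l)`-FHS set (with respect to the Peng–Fan
bound): `λ` equals the Peng–Fan bound value and there are `M` pairwise distinct FHSs of
length `n` over an alphabet of size `l` whose maximum nontrivial partial Hamming
correlation satisfies `H(S; L) ≤ ⌈Lλ/n⌉` for every window length `1 ≤ L ≤ n`. -/
def IsStrictlyOptimalFHSSet (n M lam l : ℕ) : Prop :=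
  (lam : ℤ) = pengFanBound n M l ∧
  ∃ X : Fin M → (ZMod n → Fin l),
    (∀ a b : Fin M, a ≠ b → X a ≠ X b) ∧
    ∀ L : ℕ, 1 ≤ L → L ≤ n →
      (∀ a : Fin M, ∀ τ : ZMod n, τ ≠ 0 → ∀ j : ZMod n,
        (partialHC (X a) (X a) τ j L : ℤ) ≤ ⌈((L * lam : ℕ) : ℚ) / (n : ℚ)⌉) ∧
      (∀ a b : Fin M, a ≠ b → ∀ τ j : ZMod n,
        (partialHC (X a) (X b) τ j L : ℤ) ≤ ⌈((L * lam : ℕ) : ℚ) / (n : ℚ)⌉)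

/-!
Let `q = p * M = #F` and `n = p (q - 1)`. The sequences are `X_a(t) = g ^ t + t + A a` on
`ℤ/n`, where `g` generates `Fˣ` and the `A a` represent the `M` cosets of the prime field in `F`.
A coincidence `X_a(s) = X_b(s + τ)` reads `g ^ s (1 - g ^ τ) = τ + A b - A a`. If `g ^ τ = 1` the
left side vanishes, while the right side is nonzero unless `a = b` and `p ∣ τ`, which together
with `(q - 1) ∣ τ` forces `τ = 0`. Otherwise `g ^ s` is determined, so the coincidences in a window
of `L` consecutive `s` lie in one residue class modulo `q - 1`: there are at most
`⌈L / (q - 1)⌉ = ⌈L p / n⌉` of them. The Peng–Fan quotient is `p (q - 1) (q - 2) / (q² - q - 1)`,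
which lies in `(p - 1, p]` as soon as `q ≥ 2 p`.
-/

open Finset

theorem Nat.card_filter_range_le_ceil_of_modEq {N : ℕ} (hN : 0 < N) (L : ℕ) (P : ℕ → Prop)
    [DecidablePred P] (hP : ∀ t u, P t → P u → t ≡ u [MOD N]) :
    (#{t ∈ range L | P t} : ℤ) ≤ ⌈(L : ℚ) / N⌉ := by
  by_cases h : ∃ v, P v
  · obtain ⟨v, hv⟩ := h
    calc (#{t ∈ range L | P t} : ℤ) ≤ Nat.count (· ≡ v [MOD N]) L := by
          rw [Nat.count_eq_card_filter_range]
          exact_mod_cast card_le_card (monotone_filter_right _ fun t _ ht => hP t v ht hv)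
      _ = ⌈((L : ℚ) - (v % N : ℕ)) / N⌉ := Nat.count_modEq_card_eq_ceil L hN v
      _ ≤ ⌈(L : ℚ) / N⌉ := by gcongr; exact sub_le_self _ (Nat.cast_nonneg _)
  · push Not at h
    simp only [h, filter_false, card_empty, Nat.cast_zero]
    exact Int.ceil_nonneg (by positivity)

theorem ceil_mul_div_mul_left (L p N : ℕ) (hp : 0 < p) :
    ⌈((L * p : ℕ) : ℚ) / ((p * N : ℕ) : ℚ)⌉ = ⌈(L : ℚ) / N⌉ := by
  rw [Nat.cast_mul, Nat.cast_mul, mul_comm (L : ℚ), mul_div_mul_left _ _ (by positivity)]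

theorem partialHC_comp_of_injective {n : ℕ} {F G : Type*} [DecidableEq F] [DecidableEq G]
    {e : F → G} (he : Function.Injective e) (X Y : ZMod n → F) (τ j : ZMod n) (L : ℕ) :
    partialHC (e ∘ X) (e ∘ Y) τ j L = partialHC X Y τ j L := by
  simp only [partialHC, Function.comp_apply, he.eq_iff]

theorem AddSubgroup.exists_fin_sub_mem_imp_eq {G : Type*} [AddCommGroup G] [Finite G]
    (H : AddSubgroup G) {M : ℕ} (hM : H.index = M) :
    ∃ A : Fin M → G, ∀ a b, A a - A b ∈ H → a = b := by
  subst hM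
  let e := (Finite.equivFin (G ⧸ H)).symm
  refine ⟨fun i => (e i).out, fun a b hab => e.injective ?_⟩
  rw [← QuotientAddGroup.out_eq' (e a), ← QuotientAddGroup.out_eq' (e b)]
  exact QuotientAddGroup.eq_iff_sub_mem.mpr hab

theorem AddSubgroup.index_zmultiples_one_mul (R : Type*) [Ring R] (p : ℕ) [CharP R p] :
    (zmultiples (1 : R)).index * p = Nat.card R := by
  rw [← index_mul_card (zmultiples (1 : R)), Nat.card_zmultiples,
    CharP.eq R (CharP.addOrderOf_one R) ‹_›]

section OrderOfDvd

variable {G : Type*} [Group G] {g : G} {n : ℕ}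

theorem pow_val_add_of_orderOf_dvd [NeZero n] (hg : orderOf g ∣ n) (x y : ZMod n) :
    g ^ (x + y).val = g ^ x.val * g ^ y.val := by
  rw [ZMod.val_add, ← pow_add, pow_eq_pow_iff_modEq]
  exact (Nat.mod_modEq _ _).of_dvd hg

theorem pow_val_natCast_of_orderOf_dvd (hg : orderOf g ∣ n) (t : ℕ) :
    g ^ (t : ZMod n).val = g ^ t := by
  rw [ZMod.val_natCast, pow_eq_pow_iff_modEq]
  exact (Nat.mod_modEq _ _).of_dvd hg

end OrderOfDvd

theorem pengFanBound_mul_mul_sub_one {P Y : ℕ} (hP : 2 ≤ P) (hY : 2 ≤ Y) :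
    pengFanBound (P * (P * Y - 1)) Y (P * Y) = P := by
  have hnM : P * (P * Y - 1) * Y = P * Y * (P * Y - 1) := by ring
  have hI : P * (P * Y - 1) * Y / (P * Y) = P * Y - 1 :=
    hnM ▸ Nat.mul_div_cancel_left _ (by positivity)
  have hP' : (2 : ℚ) ≤ P := by exact_mod_cast hP
  have hY' : (2 : ℚ) ≤ Y := by exact_mod_cast hY
  have hX : 2 * (P : ℚ) ≤ P * Y := by nlinarith
  have hden : (0 : ℚ) < (P * Y * (P * Y - 1) - 1) * Y :=
    mul_pos (by nlinarith) (by positivity)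
  have key : ((P : ℚ) - 1) * (P * Y * (P * Y - 1) - 1) < P * ((P * Y - 1) * (P * Y - 2)) := by
    nlinarith [mul_nonneg (sub_nonneg.mpr hX) (by nlinarith : (0 : ℚ) ≤ P * Y - 1)]
  rw [pengFanBound, hI, hnM, Int.ceil_eq_iff]
  push_cast [Nat.cast_sub (by nlinarith : 1 ≤ P * Y)]
  rw [lt_div_iff₀ hden, div_le_iff₀ hden]
  constructor
  · linear_combination (Y : ℚ) * key
  · nlinarith

section PowAddSeq

variable {F : Type*} [Field F] {n p : ℕ} [NeZero n] [CharP F p] {g : Fˣ}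

def powAddSeq (g : Fˣ) (c : F) (t : ZMod n) : F := ((g ^ t.val : Fˣ) : F) + t.cast + c

theorem powAddSeq_eq_powAddSeq_add_iff (hg : orderOf g ∣ n) (hp : p ∣ n) (a b : F)
    (s τ : ZMod n) :
    powAddSeq g a s = powAddSeq g b (s + τ) ↔
      ((g ^ s.val : Fˣ) : F) * (1 - ((g ^ τ.val : Fˣ) : F)) = τ.cast + b - a := by
  rw [powAddSeq, powAddSeq, pow_val_add_of_orderOf_dvd hg, ZMod.cast_add hp, Units.val_mul]
  constructor <;> intro h <;> linear_combination h

theorem modEq_of_powAddSeq_eq (hg : orderOf g ∣ n) (hp : p ∣ n) {a b : F} {τ : ZMod n}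
    (hτ : g ^ τ.val = 1 → (τ.cast : F) + b - a ≠ 0) (j : ZMod n) {t u : ℕ}
    (ht : powAddSeq g a (j + (t : ZMod n)) = powAddSeq g b (j + (t : ZMod n) + τ))
    (hu : powAddSeq g a (j + (u : ZMod n)) = powAddSeq g b (j + (u : ZMod n) + τ)) :
    t ≡ u [MOD orderOf g] := by
  rw [powAddSeq_eq_powAddSeq_add_iff hg hp] at ht hu
  have hne : (1 : F) - ((g ^ τ.val : Fˣ) : F) ≠ 0 := by
    intro h0
    have h1 : g ^ τ.val = 1 := Units.ext (by rw [Units.val_one]; linear_combination -h0)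
    exact hτ h1 (by rw [← ht, h0, mul_zero])
  have h := Units.ext (mul_right_cancel₀ hne (ht.trans hu.symm))
  rwa [pow_val_add_of_orderOf_dvd hg, pow_val_add_of_orderOf_dvd hg, mul_left_cancel_iff,
    pow_val_natCast_of_orderOf_dvd hg, pow_val_natCast_of_orderOf_dvd hg,
    pow_eq_pow_iff_modEq] at h

theorem partialHC_powAddSeq_le [DecidableEq F] (hg : orderOf g ∣ n) (hp : p ∣ n) {a b : F}
    {τ : ZMod n} (hτ : g ^ τ.val = 1 → (τ.cast : F) + b - a ≠ 0) (j : ZMod n) (L : ℕ) :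
    (partialHC (powAddSeq g a) (powAddSeq g b) τ j L : ℤ) ≤ ⌈(L : ℚ) / orderOf g⌉ := by
  rw [partialHC, sum_boole]
  exact Nat.card_filter_range_le_ceil_of_modEq (Nat.pos_of_dvd_of_pos hg (NeZero.pos n)) L _
    fun t u => modEq_of_powAddSeq_eq hg hp hτ j

theorem eq_zero_of_pow_val_eq_one_of_cast_eq_zero (hp : p.Coprime (orderOf g))
    (hn : p * orderOf g = n) {τ : ZMod n} (h1 : g ^ τ.val = 1) (h2 : (τ.cast : F) = 0) :
    τ = 0 := by
  subst hn
  rw [ZMod.cast_eq_val, CharP.cast_eq_zero_iff F p] at h2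
  have hτ : p * orderOf g ∣ τ.val := hp.mul_dvd_of_dvd_of_dvd h2 (orderOf_dvd_of_pow_eq_one h1)
  exact (ZMod.val_eq_zero τ).mp (Nat.eq_zero_of_dvd_of_lt hτ (ZMod.val_lt τ))

theorem cast_add_sub_ne_zero_of_pow_val_eq_one {ι : Type*} {A : ι → F}
    (hA : ∀ a b, A a - A b ∈ AddSubgroup.zmultiples (1 : F) → a = b)
    (hp : p.Coprime (orderOf g)) (hn : p * orderOf g = n) {a b : ι} {τ : ZMod n}
    (hab : a = b → τ ≠ 0) (h1 : g ^ τ.val = 1) : (τ.cast : F) + A b - A a ≠ 0 := by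
  intro h0
  have hτ : (τ.cast : F) ∈ AddSubgroup.zmultiples (1 : F) := by
    rw [ZMod.cast_eq_val, ← Int.cast_natCast]
    exact AddSubgroup.intCast_mem_zmultiples_one _
  have hba : b = a := hA b a <| by
    rw [show A b - A a = -τ.cast by linear_combination h0]
    exact neg_mem hτ
  subst hba
  exact hab rfl (eq_zero_of_pow_val_eq_one_of_cast_eq_zero hp hn h1 (by linear_combination h0))

end PowAddSeq

theorem isStrictlyOptimalFHSSet_of_natCard_eq (F : Type*) [Field F] [Finite F] {p M : ℕ}
    [hp : Fact p.Prime] [CharP F p] (hM : 2 ≤ M) (hF : Nat.card F = p * M) :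
    IsStrictlyOptimalFHSSet (p * (p * M - 1)) M p (p * M) := by
  classical
  have hq : 4 ≤ p * M := by nlinarith [hp.out.two_le]
  have : NeZero (p * (p * M - 1)) := .of_pos (Nat.mul_pos hp.out.pos (by omega))
  obtain ⟨g, hg⟩ := IsCyclic.exists_ofOrder_eq_natCard (α := Fˣ)
  rw [Nat.card_units, hF] at hg
  have hcop : p.Coprime (orderOf g) := hg ▸
    ((Nat.coprime_self_sub_right (by omega)).mpr (Nat.coprime_one_right _)).coprime_dvd_left
      (dvd_mul_right p M)
  obtain ⟨A, hA⟩ := (AddSubgroup.zmultiples (1 : F)).exists_fin_sub_mem_imp_eq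
    (Nat.eq_of_mul_eq_mul_right hp.out.pos
      ((AddSubgroup.index_zmultiples_one_mul F p).trans (hF.trans (mul_comm p M))))
  let e := Finite.equivFinOfCardEq hF
  have hcorr : ∀ L a b (τ : ZMod (p * (p * M - 1))), (a = b → τ ≠ 0) → ∀ j,
      (partialHC (e ∘ powAddSeq g (A a)) (e ∘ powAddSeq g (A b)) τ j L : ℤ) ≤
        ⌈((L * p : ℕ) : ℚ) / ((p * (p * M - 1) : ℕ) : ℚ)⌉ := by
    intro L a b τ hab j
    rw [partialHC_comp_of_injective e.injective, ceil_mul_div_mul_left _ _ _ hp.out.pos]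
    have h := partialHC_powAddSeq_le (hg ▸ dvd_mul_left _ _) (dvd_mul_right p _)
      (cast_add_sub_ne_zero_of_pow_val_eq_one hA hcop (by rw [hg]) hab) j L
    rwa [hg] at h
  refine ⟨(pengFanBound_mul_mul_sub_one hp.out.two_le hM).symm,
    fun a => e ∘ powAddSeq g (A a), fun a b hab hX => hab (hA a b ?_),
    fun L _ _ => ⟨fun a τ hτ => hcorr L a a τ fun _ => hτ,
      fun a b hab τ => hcorr L a b τ (absurd · hab)⟩⟩
  have h0 := congrFun hX 0
  simp only [Function.comp_apply, e.apply_eq_iff_eq, powAddSeq, add_right_inj] at h0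
  rw [h0, sub_self]
  exact zero_mem _

theorem stmt5 (p m : ℕ) (hp : p.Prime) (hm : 1 < m) :
    IsStrictlyOptimalFHSSet (p * (p ^ m - 1)) (p ^ (m - 1)) p (p ^ m) := by
  have := Fact.mk hp
  obtain ⟨k, rfl⟩ : ∃ k, m = k + 1 := ⟨m - 1, by omega⟩
  rw [Nat.add_sub_cancel, pow_succ']
  refine isStrictlyOptimalFHSSet_of_natCard_eq (GaloisField p (k + 1)) ?_ ?_
  · exact Nat.one_lt_pow (by omega) hp.one_lt
  · rw [GaloisField.card p _ (by omega), pow_succ']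
end

section
/- Let p be a prime and let m be an integer with m > 1. Then there exist sets K₀,…,K_{p^{m−1}−1}, each contained in {p, p−2}, and a (p(p^m−1), p, {K₀,…,K_{p^{m−1}−1}}, 1)-BNCRDP of size p^{m−1} over Z_{p(p^m−1)} such that for each of the p^{m−1} CRDPs, the set of all elements of its base blocks together with {0} is a complete system of representatives for the cosets of (p^m−1)·Z_{p(p^m−1)} in Z_{p(p^m−1)}. -/
open scoped Classical

section CountLemmas
open Finset

private lemma count_deltaList {n u : ℕ} (B : Fin u → Finset (ZMod n)) (z : ZMod n) :
    (deltaList B).count z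
      = ∑ i, ((B i ×ˢ B i).filter (fun pr => z = pr.1 - pr.2 ∧ pr.1 ≠ pr.2)).card := by
  rw [deltaList, Multiset.count_sum']
  refine Finset.sum_congr rfl fun i _ => ?_
  rw [Multiset.count_map, Finset.filter_val, Multiset.filter_filter]
  rfl

private lemma count_deltaE {n u : ℕ} (B B' : Fin u → Finset (ZMod n)) (z : ZMod n) :
    (deltaE B B').count z
      = ∑ i, ((B i ×ˢ B' i).filter (fun pr => z = pr.2 - pr.1)).card := by
  rw [deltaE, Multiset.count_sum']
  refine Finset.sum_congr rfl fun i _ => ?_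
  rw [Multiset.count_map]
  rfl

private lemma sum_card_le_one {u : ℕ} {α : Type*} (G : Fin u → Finset α)
    (h : ∀ i i' a a', a ∈ G i → a' ∈ G i' → i = i' ∧ a = a') :
    ∑ i, (G i).card ≤ 1 := by
  classical
  rw [← Finset.card_sigma]
  refine Finset.card_le_one.2 ?_
  rintro ⟨i, a⟩ ha ⟨i', a'⟩ ha'
  simp only [Finset.mem_sigma, Finset.mem_univ, true_and] at ha ha'
  obtain ⟨h1, h2⟩ := h i i' a a' ha ha'
  subst h1; subst h2; rfl

private lemma sum_card_eq_zero {u : ℕ} {α : Type*} (G : Fin u → Finset α)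
    (h : ∀ i a, a ∉ G i) : ∑ i, (G i).card = 0 :=
  Finset.sum_eq_zero fun i _ =>
    Finset.card_eq_zero.2 (Finset.eq_empty_iff_forall_notMem.2 (h i))

private lemma fiber_card {F Q : Type*} [AddCommGroup F] [Fintype F] [DecidableEq F]
    [AddCommGroup Q] [DecidableEq Q]
    (p : ℕ) [NeZero p] (μ : F →+ Q) (ι : ZMod p →+ F) (hι : Function.Injective ι)
    (hker : ∀ x, μ x = 0 ↔ ∃ c, ι c = x) (x₀ : F) :
    (univ.filter fun x => μ x = μ x₀).card = p := by
  have himg : univ.filter (fun x : F => μ x = μ x₀)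
      = (univ : Finset (ZMod p)).image (fun c => ι c + x₀) := by
    ext x
    simp only [mem_filter, mem_univ, true_and, mem_image]
    constructor
    · intro hx
      obtain ⟨c, hc⟩ := (hker (x - x₀)).1 (by rw [map_sub, hx, sub_self])
      exact ⟨c, by rw [hc, sub_add_cancel]⟩
    · rintro ⟨c, rfl⟩
      rw [map_add, (hker (ι c)).2 ⟨c, rfl⟩, zero_add]
  rw [himg, Finset.card_image_of_injective _ (fun c c' h => by
    apply hι; exact add_right_cancel h), Finset.card_univ, ZMod.card p]

private lemma filter_sum_card {β : Type*} [DecidableEq β] {ι : Type*} (s : Finset ι)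
    (f : ι → Multiset β) (P : β → Prop) [DecidablePred P] :
    Multiset.card (Multiset.filter P (∑ i ∈ s, f i))
      = ∑ i ∈ s, Multiset.card (Multiset.filter P (f i)) := by
  classical
  induction s using Finset.cons_induction with
  | empty => simp
  | cons a s ha ih =>
      rw [Finset.sum_cons, Finset.sum_cons, Multiset.filter_add, Multiset.card_add, ih]

end CountLemmas

private theorem construction
    {F : Type*} [Field F] [Fintype F] [DecidableEq F]
    {Q : Type*} [AddCommGroup Q] [DecidableEq Q]
    (p r u : ℕ) (hp : p.Prime) (hpr : ¬ p ∣ r)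
    (μ : F →+ Q) (hμsurj : Function.Surjective μ)
    (ι : ZMod p →+ F) (hι1 : ι 1 = 1)
    (hker : ∀ x : F, μ x = 0 ↔ ∃ c, ι c = x)
    (φ : F →+ ZMod p) (hφι : ∀ c, φ (ι c) = c)
    (Λ : F → ZMod r)
    (hΛmul : ∀ x y : F, x ≠ 0 → y ≠ 0 → Λ (x * y) = Λ x + Λ y)
    (hΛinj : ∀ x y : F, x ≠ 0 → y ≠ 0 → Λ x = Λ y → x = y)
    (hΛsurj : ∀ s : ZMod r, ∃ x : F, x ≠ 0 ∧ Λ x = s)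
    (e : Fin u ≃ Q) :
    ∃ A : Fin u → Fin u → Finset (ZMod (p * r)),
      IsBNCRDP (p * r) p u u (fun _ => {p, p - 2}) A ∧
      ∀ j, IsCSR (p * r) r (blockElems (A j) + {0}) := by
  classical
  haveI : Fact p.Prime := ⟨hp⟩
  haveI : NeZero p := ⟨hp.pos.ne'⟩
  have hco : Nat.Coprime p r := (Nat.Prime.coprime_iff_not_dvd hp).mpr hpr
  set crt : ZMod (p * r) ≃+* ZMod p × ZMod r := ZMod.chineseRemainder hco with hcrt
  have hι_inj : Function.Injective ι := fun c c' h => by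
    have h2 := congrArg φ h; rwa [hφι, hφι] at h2
  have hμ1 : μ 1 = 0 := (hker 1).2 ⟨1, hι1⟩
  have hΛ1 : Λ 1 = 0 := by
    have h := hΛmul 1 1 one_ne_zero one_ne_zero
    rw [mul_one] at h
    exact (left_eq_add.mp h)
  have hΛne : ∀ x : F, x ≠ 0 → x ≠ 1 → Λ x ≠ 0 := fun x h0 h1 hx =>
    h1 (hΛinj x 1 h0 one_ne_zero (by rw [hx, hΛ1]))
  have hdiv : ∀ x y x' y' : F, x ≠ 0 → y ≠ 0 → x' ≠ 0 → y' ≠ 0 →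
      Λ x - Λ y = Λ x' - Λ y' → x * y' = x' * y := by
    intro x y x' y' hx hy hx' hy' h
    apply hΛinj _ _ (mul_ne_zero hx hy') (mul_ne_zero hx' hy)
    rw [hΛmul _ _ hx hy', hΛmul _ _ hx' hy]
    exact sub_eq_sub_iff_add_eq_add.mp h
  set Φ : F → ZMod (p * r) := fun x => crt.symm (φ x, Λ x) with hΦdef
  have hΦ : ∀ x, crt (Φ x) = (φ x, Λ x) := fun x => crt.apply_symm_apply _
  have hΦd : ∀ x y : F, crt (Φ x - Φ y) = (φ x - φ y, Λ x - Λ y) := by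
    intro x y; rw [map_sub, hΦ, hΦ, Prod.mk_sub_mk]
  have hΦinj : ∀ x y : F, x ≠ 0 → y ≠ 0 → Φ x = Φ y → x = y := by
    intro x y hx hy h
    have h2 := congrArg (fun z => (crt z).2) h
    simp only [hΦ] at h2
    exact hΛinj x y hx hy h2
  set blkset : Q → Finset F :=
    (fun c => Finset.univ.filter (fun x : F => x ≠ 0 ∧ x ≠ 1 ∧ μ x = c)) with hblkdef
  set A : Fin u → Fin u → Finset (ZMod (p * r)) :=
    (fun j i => (blkset (e i + e j)).image Φ) with hAdef
  have hmemblk : ∀ (c : Q) (x : F), x ∈ blkset c ↔ (x ≠ 0 ∧ x ≠ 1 ∧ μ x = c) := by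
    intro c x; rw [hblkdef]; simp
  have hmemA : ∀ j i a, a ∈ A j i ↔
      ∃ x : F, (x ≠ 0 ∧ x ≠ 1 ∧ μ x = e i + e j) ∧ Φ x = a := by
    intro j i a
    rw [hAdef]
    simp only [Finset.mem_image]
    constructor
    · rintro ⟨x, hx, rfl⟩; exact ⟨x, (hmemblk _ x).1 hx, rfl⟩
    · rintro ⟨x, hx, rfl⟩; exact ⟨x, (hmemblk _ x).2 hx, rfl⟩
  -- key pair lemma
  have key_pair : ∀ (x y x' y' : F), x ≠ 0 → y ≠ 0 → x' ≠ 0 → y' ≠ 0 →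
      x - y = x' - y' → x - y ≠ 0 → Λ x - Λ y = Λ x' - Λ y' → x = x' ∧ y = y' := by
    intro x y x' y' hx hy hx' hy' hd hd0 hL
    have hxy := hdiv x y x' y' hx hy hx' hy' hL
    have hyy : (x - y) * y' = (x - y) * y := by nth_rewrite 2 [hd]; linear_combination hxy
    have hy'y : y' = y := mul_left_cancel₀ hd0 hyy
    refine ⟨?_, hy'y.symm⟩
    have h3 : x - y = x' - y := by rw [hd, hy'y]
    exact sub_left_inj.mp h3
  -- inSub characterization
  have hsubr : ∀ z : ZMod (p * r), inSub (p * r) r z ↔ (crt z).2 = 0 := by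
    intro z
    constructor
    · rintro ⟨w, rfl⟩
      simp [map_mul, map_natCast, Prod.snd_mul, Prod.snd_natCast, ZMod.natCast_self]
    · intro h
      have hrp : (r : ZMod p) ≠ 0 := by
        rw [Ne, ZMod.natCast_eq_zero_iff]; exact hpr
      refine ⟨crt.symm ((r : ZMod p)⁻¹ * (crt z).1, 0), ?_⟩
      apply crt.injective
      rw [map_mul, crt.apply_symm_apply, map_natCast]
      refine Prod.ext ?_ ?_
      · rw [Prod.fst_mul, Prod.fst_natCast, mul_inv_cancel_left₀ hrp]
      · rw [Prod.snd_mul, Prod.snd_natCast, h, mul_zero]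
  have hblkelem : ∀ j i (a : ZMod (p * r)), a ∈ A j i → (crt a).2 ≠ 0 := by
    intro j i a ha
    rw [hmemA] at ha
    obtain ⟨x, hx, rfl⟩ := ha
    have : (crt (Φ x)).2 = Λ x := by rw [hΦ]
    rw [this]
    exact hΛne x hx.1 hx.2.1
  -- internal differences
  have hint_le : ∀ j (z : ZMod (p * r)), (deltaList (A j)).count z ≤ 1 := by
    intro j z
    rw [count_deltaList]
    apply sum_card_le_one
    rintro i i' ⟨a1, a2⟩ ⟨b1, b2⟩ ha hb
    simp only [Finset.mem_filter, Finset.mem_product] at ha hb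
    obtain ⟨⟨ha1, ha2⟩, hz, hne⟩ := ha
    obtain ⟨⟨hb1, hb2⟩, hz', hne'⟩ := hb
    rw [hmemA] at ha1 ha2 hb1 hb2
    obtain ⟨x, hx, rfl⟩ := ha1
    obtain ⟨y, hy, rfl⟩ := ha2
    obtain ⟨x', hx', rfl⟩ := hb1
    obtain ⟨y', hy', rfl⟩ := hb2
    have hcz : (φ x - φ y, Λ x - Λ y) = (φ x' - φ y', Λ x' - Λ y') := by
      rw [← hΦd, ← hΦd, ← hz, ← hz']
    have hcz1 : φ x - φ y = φ x' - φ y' := congrArg Prod.fst hcz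
    have hcz2 : Λ x - Λ y = Λ x' - Λ y' := congrArg Prod.snd hcz
    have hxyne : x ≠ y := fun h => hne (by rw [h])
    have hx'y'ne : x' ≠ y' := fun h => hne' (by rw [h])
    obtain ⟨c, hc⟩ := (hker (x - y)).1 (by rw [map_sub, hx.2.2, hy.2.2, sub_self])
    obtain ⟨c', hc'⟩ := (hker (x' - y')).1 (by rw [map_sub, hx'.2.2, hy'.2.2, sub_self])
    have hcc : c = c' := by
      have e1 : φ (x - y) = c := by rw [← hc, hφι]
      have e2 : φ (x' - y') = c' := by rw [← hc', hφι]
      rw [map_sub] at e1 e2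
      rw [← e1, ← e2, hcz1]
    have hdd : x - y = x' - y' := by rw [← hc, ← hc', hcc]
    obtain ⟨hxx, hyy⟩ := key_pair x y x' y' hx.1 hy.1 hx'.1 hy'.1 hdd
      (sub_ne_zero_of_ne hxyne) hcz2
    have hii : i = i' := by
      apply e.injective
      have := hx.2.2
      rw [hxx, hx'.2.2] at this
      exact (add_right_cancel this).symm
    subst hxx; subst hyy; subst hii
    exact ⟨rfl, rfl⟩
  have hint_H : ∀ j (z : ZMod (p * r)), inSub (p * r) r z → (deltaList (A j)).count z = 0 := by
    intro j z hz
    rw [count_deltaList]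
    apply sum_card_eq_zero
    rintro i ⟨a1, a2⟩ ha
    simp only [Finset.mem_filter, Finset.mem_product] at ha
    obtain ⟨⟨ha1, ha2⟩, hzz, hne⟩ := ha
    rw [hmemA] at ha1 ha2
    obtain ⟨x, hx, rfl⟩ := ha1
    obtain ⟨y, hy, rfl⟩ := ha2
    have h0 := (hsubr z).1 hz
    rw [hzz] at h0
    rw [hΦd] at h0
    have : Λ x = Λ y := by
      have := sub_eq_zero.mp h0
      exact this
    exact hne (by rw [hΛinj x y hx.1 hy.1 this])
  -- external differences
  have hext_le : ∀ j j' : Fin u, j ≠ j' → ∀ z : ZMod (p * r),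
      (deltaE (A j) (A j')).count z ≤ 1 := by
    intro j j' hjj z
    rw [count_deltaE]
    apply sum_card_le_one
    rintro i i' ⟨a1, a2⟩ ⟨b1, b2⟩ ha hb
    simp only [Finset.mem_filter, Finset.mem_product] at ha hb
    obtain ⟨⟨ha1, ha2⟩, hz⟩ := ha
    obtain ⟨⟨hb1, hb2⟩, hz'⟩ := hb
    rw [hmemA] at ha1 ha2 hb1 hb2
    obtain ⟨y, hy, rfl⟩ := ha1
    obtain ⟨x, hx, rfl⟩ := ha2
    obtain ⟨y', hy', rfl⟩ := hb1
    obtain ⟨x', hx', rfl⟩ := hb2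
    have hcz : (φ x - φ y, Λ x - Λ y) = (φ x' - φ y', Λ x' - Λ y') := by
      rw [← hΦd, ← hΦd, ← hz, ← hz']
    have hcz1 : φ x - φ y = φ x' - φ y' := congrArg Prod.fst hcz
    have hcz2 : Λ x - Λ y = Λ x' - Λ y' := congrArg Prod.snd hcz
    have hejj : e j' - e j ≠ 0 := sub_ne_zero_of_ne (fun h => hjj (e.injective h).symm)
    have hμd : μ (x - y) = e j' - e j := by
      rw [map_sub, hx.2.2, hy.2.2]; abel
    have hμd' : μ (x' - y') = e j' - e j := by
      rw [map_sub, hx'.2.2, hy'.2.2]; abel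
    obtain ⟨c, hc⟩ := (hker ((x - y) - (x' - y'))).1 (by rw [map_sub, hμd, hμd', sub_self])
    have hc0 : c = 0 := by
      have e1 : φ ((x - y) - (x' - y')) = c := by rw [← hc, hφι]
      rw [map_sub, map_sub, map_sub] at e1
      rw [← e1]
      rw [hcz1]
      ring
    have hdd : x - y = x' - y' := by
      have : (x - y) - (x' - y') = 0 := by rw [← hc, hc0, map_zero]
      exact sub_eq_zero.mp this
    have hd0 : x - y ≠ 0 := fun h => hejj (by rw [← hμd, h, map_zero])
    obtain ⟨hxx, hyy⟩ := key_pair x y x' y' hx.1 hy.1 hx'.1 hy'.1 hdd hd0 hcz2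
    have hii : i = i' := by
      apply e.injective
      have := hy.2.2
      rw [hyy, hy'.2.2] at this
      exact (add_right_cancel this).symm
    subst hxx; subst hyy; subst hii
    exact ⟨rfl, rfl⟩
  have hext_H : ∀ j j' : Fin u, j ≠ j' → ∀ z : ZMod (p * r), inSub (p * r) r z →
      (deltaE (A j) (A j')).count z = 0 := by
    intro j j' hjj z hz
    rw [count_deltaE]
    apply sum_card_eq_zero
    rintro i ⟨a1, a2⟩ ha
    simp only [Finset.mem_filter, Finset.mem_product] at ha
    obtain ⟨⟨ha1, ha2⟩, hzz⟩ := ha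
    rw [hmemA] at ha1 ha2
    obtain ⟨y, hy, rfl⟩ := ha1
    obtain ⟨x, hx, rfl⟩ := ha2
    have h0 := (hsubr z).1 hz
    rw [hzz, hΦd] at h0
    have hxy : x = y := hΛinj x y hx.1 hy.1 (sub_eq_zero.mp h0)
    apply hjj
    apply e.injective
    have := hx.2.2
    rw [hxy, hy.2.2] at this
    exact add_left_cancel this
  have hng : (p * r) / p = r := Nat.mul_div_cancel_left r hp.pos
  -- CSR
  have hCSR : ∀ j, IsCSR (p * r) r (blockElems (A j) + {0}) := by
    intro j w
    have hPiff : ∀ t : ZMod (p * r), (inSub (p * r) r (w - t)) ↔ ((crt t).2 = (crt w).2) := by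
      intro t
      rw [hsubr, map_sub, Prod.snd_sub, sub_eq_zero, eq_comm]
    rw [Multiset.filter_congr (fun t _ => hPiff t)]
    rw [Multiset.filter_add, Multiset.card_add]
    rw [show blockElems (A j) = ∑ i, (A j i).val from rfl]
    rw [filter_sum_card]
    have hconv : ∀ (i : Fin u),
        Multiset.card (Multiset.filter (fun t => (crt t).2 = (crt w).2) (A j i).val)
          = ((A j i).filter (fun t => (crt t).2 = (crt w).2)).card := by
      intro i
      rfl
    simp only [hconv]
    by_cases h0 : (crt w).2 = 0
    · have h1 : ∀ i : Fin u,
          ((A j i).filter (fun t => (crt t).2 = (crt w).2)).card = 0 := by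
        intro i
        rw [Finset.card_eq_zero, Finset.filter_eq_empty_iff]
        intro a ha hpa
        exact hblkelem j i a ha (by rw [hpa, h0])
      rw [Finset.sum_eq_zero fun i _ => h1 i]
      rw [Multiset.filter_singleton, if_pos (by rw [map_zero, Prod.snd_zero, h0])]
      rfl
    · obtain ⟨x₀, hx₀0, hx₀Λ⟩ := hΛsurj (crt w).2
      have hx₀1 : x₀ ≠ 1 := fun h => h0 (by rw [← hx₀Λ, h, hΛ1])
      set i₀ := e.symm (μ x₀ - e j) with hi₀
      have hmem₀ : μ x₀ = e i₀ + e j := by rw [hi₀, Equiv.apply_symm_apply, sub_add_cancel]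
      have hsum : ∑ i, ((A j i).filter (fun t => (crt t).2 = (crt w).2)).card = 1 := by
        rw [← Finset.card_sigma]
        rw [Finset.card_eq_one]
        refine ⟨⟨i₀, Φ x₀⟩, ?_⟩
        rw [Finset.eq_singleton_iff_unique_mem]
        constructor
        · rw [Finset.mem_sigma]
          refine ⟨Finset.mem_univ _, ?_⟩
          rw [Finset.mem_filter]
          constructor
          · rw [hmemA]; exact ⟨x₀, ⟨hx₀0, hx₀1, hmem₀⟩, rfl⟩
          · rw [hΦ]; exact hx₀Λ
        · rintro ⟨i, t⟩ ht
          rw [Finset.mem_sigma, Finset.mem_filter] at ht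
          obtain ⟨-, htA, hts⟩ := ht
          rw [hmemA] at htA
          obtain ⟨x, hx, rfl⟩ := htA
          have hΛx : Λ x = (crt w).2 := by simpa [hΦ x] using hts
          have hxx₀ : x = x₀ := hΛinj x x₀ hx.1 hx₀0 (by rw [hΛx, hx₀Λ])
          have hii : i = i₀ := by
            apply e.injective
            have := hx.2.2
            rw [hxx₀, hmem₀] at this
            exact (add_right_cancel this).symm
          subst hii
          rw [hxx₀]
      rw [hsum]
      rw [Multiset.filter_singleton,
        if_neg (by rw [map_zero, Prod.snd_zero]; exact fun h => h0 h.symm)]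
      rfl
  refine ⟨A, ⟨?_, ?_⟩, hCSR⟩
  · intro j
    refine ⟨?_, fun x hx => hint_H j x (by rwa [hng] at hx), hint_le j⟩
    intro i
    have hinj : Set.InjOn Φ (blkset (e i + e j)) := by
      intro x hx y hy h
      rw [Finset.mem_coe, hmemblk] at hx hy
      exact hΦinj x y hx.1 hy.1 h
    have hcard : (A j i).card = (blkset (e i + e j)).card := by
      rw [hAdef]
      exact Finset.card_image_of_injOn hinj
    obtain ⟨x₀, hx₀⟩ := hμsurj (e i + e j)
    have hfib : (Finset.univ.filter (fun x : F => μ x = e i + e j)).card = p := by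
      rw [← hx₀]
      exact fiber_card p μ ι hι_inj hker x₀
    by_cases hc : e i + e j = 0
    · have hsub : blkset (e i + e j)
          = (Finset.univ.filter (fun x : F => μ x = e i + e j)) \ {0, 1} := by
        ext x
        rw [hmemblk, Finset.mem_sdiff, Finset.mem_filter]
        simp only [Finset.mem_univ, true_and, Finset.mem_insert, Finset.mem_singleton]
        tauto
      have hss : ({0, 1} : Finset F) ⊆ Finset.univ.filter (fun x : F => μ x = e i + e j) := by
        intro x hx
        rw [Finset.mem_insert, Finset.mem_singleton] at hx
        rw [Finset.mem_filter]
        refine ⟨Finset.mem_univ _, ?_⟩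
        rcases hx with rfl | rfl
        · rw [map_zero, hc]
        · rw [hμ1, hc]
      have h01 : ({0, 1} : Finset F).card = 2 := by
        rw [Finset.card_insert_of_notMem (by simp), Finset.card_singleton]
      rw [hcard, hsub, Finset.card_sdiff_of_subset hss, hfib, h01]
      exact Set.mem_insert_iff.mpr (Or.inr rfl)
    · have hsub : blkset (e i + e j) = Finset.univ.filter (fun x : F => μ x = e i + e j) := by
        ext x
        rw [hmemblk, Finset.mem_filter]
        simp only [Finset.mem_univ, true_and]
        constructor
        · tauto
        · intro hx
          refine ⟨?_, ?_, hx⟩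
          · rintro rfl; exact hc (by rw [← hx, map_zero])
          · rintro rfl; exact hc (by rw [← hx, hμ1])
      rw [hcard, hsub, hfib]
      exact Set.mem_insert_iff.mpr (Or.inl rfl)
  · intro j j' hjj
    exact ⟨fun x hx => hext_H j j' hjj x (by rwa [hng] at hx), hext_le j j' hjj⟩
theorem stmt6 (p m : ℕ) (hp : p.Prime) (hm : 1 < m) :
    ∃ K : Fin (p ^ (m - 1)) → Set ℕ,
      (∀ j, K j ⊆ {p, p - 2}) ∧
      ∃ A : Fin (p ^ (m - 1)) → Fin (p ^ (m - 1)) → Finset (ZMod (p * (p ^ m - 1))),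
        IsBNCRDP (p * (p ^ m - 1)) p (p ^ (m - 1)) (p ^ (m - 1)) K A ∧
        ∀ j, IsCSR (p * (p ^ m - 1)) (p ^ m - 1)
          (blockElems (A j) + ({0} : Multiset (ZMod (p * (p ^ m - 1))))) := by
  classical
  haveI : Fact p.Prime := ⟨hp⟩
  haveI : NeZero p := ⟨hp.pos.ne'⟩
  have hm0 : m ≠ 0 := by omega
  set F := GaloisField p m with hF
  haveI : Fintype F := Fintype.ofFinite F
  have hcardF : Fintype.card F = p ^ m := by
    have h := GaloisField.card p m hm0
    rwa [Nat.card_eq_fintype_card] at h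
  have hq1 : 1 ≤ p ^ m := Nat.one_le_pow _ _ hp.pos
  have hpr : ¬ p ∣ p ^ m - 1 := by
    intro h
    have h2 : p ∣ p ^ m := dvd_pow_self p hm0
    have h3 : p ∣ p ^ m - (p ^ m - 1) := Nat.dvd_sub h2 h
    rw [Nat.sub_sub_self hq1] at h3
    exact hp.one_lt.ne' (Nat.dvd_one.mp h3)
  set S : Submodule (ZMod p) F := Submodule.span (ZMod p) {1} with hS
  set ι : ZMod p →+ F := (Algebra.linearMap (ZMod p) F).toAddMonoidHom with hι
  have hιc : ∀ c : ZMod p, ι c = c • (1 : F) := fun c => Algebra.algebraMap_eq_smul_one c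
  have hι1 : ι 1 = 1 := by rw [hιc, one_smul]
  set μ : F →+ (F ⧸ S) := S.mkQ.toAddMonoidHom with hμ
  have hμsurj : Function.Surjective μ := S.mkQ_surjective
  have hker : ∀ x : F, μ x = 0 ↔ ∃ c, ι c = x := by
    intro x
    rw [show μ x = Submodule.Quotient.mk x from rfl, Submodule.Quotient.mk_eq_zero, hS,
      Submodule.mem_span_singleton]
    constructor
    · rintro ⟨a, ha⟩; exact ⟨a, by rw [hιc]; exact ha⟩
    · rintro ⟨c, hc⟩; exact ⟨c, by rw [← hιc]; exact hc⟩
  obtain ⟨ψ, hψ⟩ : ∃ ψ : F →ₗ[ZMod p] ZMod p, ∀ c : ZMod p, ψ (c • (1:F)) = c := by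
    obtain ⟨g, hg⟩ := LinearMap.exists_extend
      ((LinearEquiv.toSpanNonzeroSingleton (ZMod p) F 1 one_ne_zero).symm.toLinearMap)
    refine ⟨g, fun c => ?_⟩
    have hmem : c • (1:F) ∈ Submodule.span (ZMod p) ({1} : Set F) :=
      Submodule.smul_mem _ c (Submodule.mem_span_singleton_self 1)
    have h2 := LinearMap.congr_fun hg ⟨c • (1:F), hmem⟩
    rw [LinearMap.comp_apply] at h2
    have h3 : g ((Submodule.span (ZMod p) ({1} : Set F)).subtype ⟨c • (1:F), hmem⟩)
        = g (c • (1:F)) := rfl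
    rw [h3] at h2
    rw [h2, LinearEquiv.coe_coe, LinearEquiv.symm_apply_eq]
    apply Subtype.ext
    simp [LinearEquiv.toSpanNonzeroSingleton_apply]
  set φA : F →+ ZMod p := ψ.toAddMonoidHom with hφA
  have hφι : ∀ c, φA (ι c) = c := fun c => by
    have : φA (ι c) = ψ (c • (1:F)) := by rw [hιc]; rfl
    rw [this]; exact hψ c
  have hι_inj : Function.Injective ι := fun c c' h => by
    have h2 := congrArg φA h; rwa [hφι, hφι] at h2
  have hcardU : Nat.card Fˣ = p ^ m - 1 := by
    rw [Nat.card_eq_fintype_card, Fintype.card_units, hcardF]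
  obtain ⟨E⟩ : Nonempty (Multiplicative (ZMod (p ^ m - 1)) ≃* Fˣ) := by
    rw [← hcardU]
    exact ⟨zmodCyclicMulEquiv inferInstance⟩
  set Λ : F → ZMod (p ^ m - 1) :=
    (fun x => if h : x = 0 then 0 else Multiplicative.toAdd (E.symm (Units.mk0 x h))) with hΛ
  have hΛval : ∀ (x : F) (h : x ≠ 0), Λ x = Multiplicative.toAdd (E.symm (Units.mk0 x h)) := by
    intro x h; rw [hΛ]; simp [h]
  have hΛmul : ∀ x y : F, x ≠ 0 → y ≠ 0 → Λ (x * y) = Λ x + Λ y := by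
    intro x y hx hy
    rw [hΛval _ (mul_ne_zero hx hy), hΛval _ hx, hΛval _ hy]
    rw [show Units.mk0 (x * y) (mul_ne_zero hx hy) = Units.mk0 x hx * Units.mk0 y hy from
      Units.ext rfl]
    rw [map_mul]
    rfl
  have hΛinj : ∀ x y : F, x ≠ 0 → y ≠ 0 → Λ x = Λ y → x = y := by
    intro x y hx hy h
    rw [hΛval _ hx, hΛval _ hy] at h
    have h2 := E.symm.injective (Multiplicative.toAdd.injective h)
    exact congrArg Units.val h2
  have hΛsurj : ∀ s : ZMod (p ^ m - 1), ∃ x : F, x ≠ 0 ∧ Λ x = s := by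
    intro s
    refine ⟨((E (Multiplicative.ofAdd s) : Fˣ) : F), Units.ne_zero _, ?_⟩
    rw [hΛval _ (Units.ne_zero _)]
    rw [show Units.mk0 ((E (Multiplicative.ofAdd s) : Fˣ) : F) (Units.ne_zero _)
        = E (Multiplicative.ofAdd s) from Units.ext rfl]
    rw [E.symm_apply_apply]
    rfl
  haveI : Finite (F ⧸ S) := Finite.of_surjective _ hμsurj
  haveI : Fintype (F ⧸ S) := Fintype.ofFinite _
  have hfib : ∀ c : F ⧸ S, (Finset.univ.filter fun x : F => μ x = c).card = p := by
    intro c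
    obtain ⟨x₀, rfl⟩ := hμsurj c
    exact fiber_card p μ ι hι_inj hker x₀
  have hcardQ : Fintype.card (F ⧸ S) = p ^ (m - 1) := by
    have h1 : Fintype.card F = Fintype.card (F ⧸ S) * p := by
      calc Fintype.card F = (Finset.univ : Finset F).card := (Finset.card_univ).symm
        _ = ∑ c : F ⧸ S, (Finset.univ.filter fun x : F => μ x = c).card :=
            Finset.card_eq_sum_card_fiberwise (fun x _ => Finset.mem_univ (μ x))
        _ = ∑ _c : F ⧸ S, p := Finset.sum_congr rfl fun c _ => hfib c
        _ = Fintype.card (F ⧸ S) * p := by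
            rw [Finset.sum_const, Finset.card_univ, smul_eq_mul]
    have h2 : p ^ (m - 1) * p = p ^ m := by
      rw [← pow_succ]
      congr 1
      omega
    rw [hcardF, ← h2] at h1
    exact (Nat.eq_of_mul_eq_mul_right hp.pos h1.symm)
  set e : Fin (p ^ (m - 1)) ≃ (F ⧸ S) := (Fintype.equivFinOfCardEq hcardQ).symm with he
  obtain ⟨A, hA, hCSR⟩ := construction p (p ^ m - 1) (p ^ (m - 1)) hp hpr μ hμsurj ι hι1 hker
    φA hφι Λ hΛmul hΛinj hΛsurj e
  exact ⟨fun _ => {p, p - 2}, fun _ => subset_rfl, A, hA, hCSR⟩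
end

section
/- Let p be a prime and let m be an integer with m > 1. Let w be an odd integer whose least prime factor is greater than p^m. Then there exists a strictly optimal (wp(p^m−1), p^{m−1}, p; p^m w)-FHS set; that is, there exists a set S of M = p^{m−1} FHSs of length n = wp(p^m−1) over an alphabet of size l = p^m w such that H(S;L) ≤ ⌈Lp/n⌉ for every L with 1 ≤ L ≤ n, where p = ⌈(2InM−(I+1)Il)/((nM−1)M)⌉ with I = ⌊nM/l⌋. -/
open Finset

theorem ZMod.cast_cast_of_dvd {a b n : ℕ} (ha : a ∣ b) (hb : b ∣ n) (x : ZMod n) :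
    ((x.cast : ZMod b).cast : ZMod a) = x.cast :=
  RingHom.congr_fun (ZMod.castHom_comp ha hb) x

theorem ZMod.eq_of_cast_eq_of_coprime {a b : ℕ} (hab : a.Coprime b) {x y : ZMod (a * b)}
    (ha : (x.cast : ZMod a) = y.cast) (hb : (x.cast : ZMod b) = y.cast) : x = y := by
  have hcrt : ((ZMod.chineseRemainder hab : ZMod (a * b) ≃+* ZMod a × ZMod b) :
      ZMod (a * b) →+* ZMod a × ZMod b) =
      (ZMod.castHom (dvd_mul_right a b) (ZMod a)).prod
        (ZMod.castHom (dvd_mul_left b a) (ZMod b)) :=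
    Subsingleton.elim _ _
  apply (ZMod.chineseRemainder hab).injective
  rw [← RingEquiv.coe_toRingHom, RingHom.congr_fun hcrt x, RingHom.congr_fun hcrt y]
  exact Prod.ext ha hb

theorem ZMod.eq_zero_of_cast_eq_zero_of_coprime {a b c : ℕ} (hab : a.Coprime b)
    (habc : (a * b).Coprime c) {x : ZMod (a * b * c)} (ha : (x.cast : ZMod a) = 0)
    (hb : (x.cast : ZMod b) = 0) (hc : (x.cast : ZMod c) = 0) : x = 0 := by
  have hab0 : (x.cast : ZMod (a * b)) = 0 := by
    apply ZMod.eq_of_cast_eq_of_coprime hab <;>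
      rw [ZMod.cast_cast_of_dvd (by simp) (by simp), ZMod.cast_zero]
    exacts [ha, hb]
  apply ZMod.eq_of_cast_eq_of_coprime habc <;> rw [ZMod.cast_zero]
  exacts [hab0, hc]

theorem ZMod.isUnit_natCast_of_lt_minFac {w k : ℕ} (hk : k ≠ 0) (hkw : k < w.minFac) :
    IsUnit (k : ZMod w) :=
  (ZMod.isUnit_iff_coprime k w).mpr (Nat.coprime_of_lt_minFac hk hkw).symm

theorem ZMod.isUnit_natCast_sub_natCast_of_lt_minFac {w a b : ℕ} (hab : a ≠ b)
    (ha : a < w.minFac) (hb : b < w.minFac) : IsUnit ((a : ZMod w) - b) := by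
  rcases lt_or_gt_of_ne hab with h | h
  · have : (a : ZMod w) - b = -((b - a : ℕ) : ZMod w) := by rw [Nat.cast_sub h.le]; ring
    exact this ▸ (ZMod.isUnit_natCast_of_lt_minFac (by omega) (by omega)).neg
  · have : (a : ZMod w) - b = ((a - b : ℕ) : ZMod w) := by rw [Nat.cast_sub h.le]
    exact this ▸ ZMod.isUnit_natCast_of_lt_minFac (by omega) (by omega)

theorem card_filter_natCast_eq_le_ceil (k : ℕ) [NeZero k] (L t₀ : ℕ) :
    (#{t ∈ range L | ((t : ℕ) : ZMod k) = t₀} : ℤ) ≤ ⌈(L : ℚ) / k⌉ := by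
  simp_rw [ZMod.natCast_eq_natCast_iff, ← Nat.count_eq_card_filter_range,
    Nat.count_modEq_card_eq_ceil _ (Nat.pos_of_neZero k)]
  gcongr
  exact sub_le_self _ (Nat.cast_nonneg _)

theorem partialHC_le_ceil_of_cast_eq {β : Type*} [DecidableEq β] {n k : ℕ} [NeZero k]
    (hk : k ∣ n) {X Y : ZMod n → β} {τ : ZMod n}
    (hXY : ∀ s s', X s = Y (s + τ) → X s' = Y (s' + τ) → (s.cast : ZMod k) = s'.cast)
    (j : ZMod n) (L : ℕ) : (partialHC X Y τ j L : ℤ) ≤ ⌈(L : ℚ) / k⌉ := by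
  rw [partialHC, sum_boole, Nat.cast_id]
  rcases eq_empty_or_nonempty {t ∈ range L | X (j + ((t : ℕ) : ZMod n)) = Y (j + t + τ)}
    with h | ⟨t₀, ht₀⟩
  · rw [h, card_empty, Nat.cast_zero]
    positivity
  · refine le_trans (Nat.cast_le.mpr (card_le_card fun t ht => ?_))
      (card_filter_natCast_eq_le_ceil k L t₀)
    rw [mem_filter] at ht ht₀ ⊢
    refine ⟨ht.1, ?_⟩
    have := hXY _ _ ht.2 ht₀.2
    rwa [ZMod.cast_add hk, ZMod.cast_add hk, ZMod.cast_natCast hk, ZMod.cast_natCast hk,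
      add_right_inj] at this

section OrderOf

variable {G : Type*} [Monoid G] {α : G} {E : ℕ} [NeZero E]

theorem pow_val_add_of_orderOf_eq (hα : orderOf α = E) (z σ : ZMod E) :
    α ^ (z + σ).val = α ^ z.val * α ^ σ.val := by
  rw [← pow_add, ZMod.val_add]
  conv_rhs => rw [← pow_mod_orderOf, hα]

theorem pow_val_injective_of_orderOf_eq (hα : orderOf α = E) :
    Function.Injective fun z : ZMod E => α ^ z.val := fun z z' h =>
  ZMod.val_injective E <| pow_injOn_Iio_orderOf (by simp [hα, ZMod.val_lt])
    (by simp [hα, ZMod.val_lt]) h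

end OrderOf

theorem FiniteField.exists_orderOf_eq_card_sub_one (F : Type*) [Field F] [Finite F] :
    ∃ α : F, orderOf α = Nat.card F - 1 := by
  obtain ⟨g, hg⟩ := IsCyclic.exists_ofOrder_eq_natCard (α := Fˣ)
  exact ⟨g, by rw [orderOf_units, hg, Nat.card_units]⟩

theorem AddSubgroup.exists_fin_transversal {G : Type*} [AddCommGroup G] [Finite G]
    (H : AddSubgroup G) {M : ℕ} (hM : Nat.card G = M * Nat.card H) :
    ∃ γ : Fin M → G, ∀ a b, γ a - γ b ∈ H → a = b := by
  have hQ : Nat.card (G ⧸ H) = M := Nat.eq_of_mul_eq_mul_right Nat.card_pos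
    (H.card_eq_card_quotient_mul_card_addSubgroup.symm.trans hM)
  let e := (Finite.equivFinOfCardEq hQ).symm
  refine ⟨fun a => (e a).out, fun a b hab => e.injective ?_⟩
  rw [← QuotientAddGroup.out_eq' (e a), ← QuotientAddGroup.out_eq' (e b)]
  exact QuotientAddGroup.eq_iff_sub_mem.mpr hab

theorem exists_fin_transversal_range_algebraMap (p m : ℕ) [Fact p.Prime] (hm : m ≠ 0)
    (F : Type*) [Field F] [Algebra (ZMod p) F] (hF : Nat.card F = p ^ m) :
    ∃ γ : Fin (p ^ (m - 1)) → F, ∀ a b,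
      γ a - γ b ∈ (algebraMap (ZMod p) F).range → a = b := by
  have : Finite F := Nat.finite_of_card_ne_zero (by simp [hF, (Fact.out : p.Prime).ne_zero])
  have hcard : Nat.card (algebraMap (ZMod p) F).range.toAddSubgroup = p := by
    refine (Nat.card_congr (Equiv.subtypeEquivRight fun x => ?_)).trans
      ((Nat.card_range_of_injective (algebraMap (ZMod p) F).injective).trans (Nat.card_zmod p))
    simp
  refine (algebraMap (ZMod p) F).range.toAddSubgroup.exists_fin_transversal ?_
  rw [hF, hcard, ← pow_succ, Nat.sub_add_cancel (Nat.one_le_iff_ne_zero.mpr hm)]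

theorem pengFanBound_eq {n M l I p : ℕ} (hl : 0 < l) (hnM : n * M = l * I)
    (hpM : p * M = I + 1) (hM : 2 ≤ M) (hI : 2 ≤ I) : pengFanBound n M l = p := by
  have hdiv : n * M / l = I := by rw [hnM, Nat.mul_div_cancel_left _ hl]
  have hnM' : (n : ℚ) * M = l * I := by exact_mod_cast hnM
  have hpM' : (p : ℚ) * M = I + 1 := by exact_mod_cast hpM
  have hl' : (1 : ℚ) ≤ l := by exact_mod_cast hl
  have hM' : (2 : ℚ) ≤ M := by exact_mod_cast hM
  have hI' : (2 : ℚ) ≤ I := by exact_mod_cast hI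
  have hlI : (1 : ℚ) ≤ l * I - 1 := by nlinarith
  have hnum : ((2 * I * n * M : ℕ) : ℚ) - ((I + 1) * I * l : ℕ) = I * l * (I - 1) := by
    push_cast
    linear_combination 2 * (I : ℚ) * hnM'
  have hden : (((n * M : ℕ) : ℚ) - 1) * M = (l * I - 1) * M := by
    push_cast
    rw [hnM']
  have hden_pos : (0 : ℚ) < (l * I - 1) * M := by positivity
  rw [pengFanBound, hdiv, hnum, hden, Int.ceil_eq_iff, Int.cast_natCast,
    lt_div_iff₀ hden_pos, div_le_iff₀ hden_pos]
  constructor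
  · nlinarith [mul_nonneg (sub_nonneg.mpr hM') (sub_nonneg.mpr hlI)]
  · nlinarith

theorem pengFanBound_eq_of_pow {p m w : ℕ} (hp : 2 ≤ p) (hm : 1 < m) (hw : w ≠ 0) :
    pengFanBound (w * p * (p ^ m - 1)) (p ^ (m - 1)) (p ^ m * w) = p := by
  have hpm : 4 ≤ p ^ m := (Nat.pow_le_pow_left hp 2).trans (Nat.pow_le_pow_right (by omega) hm)
  have hpM : p * p ^ (m - 1) = p ^ m := by rw [← pow_succ', Nat.sub_add_cancel hm.le]
  refine pengFanBound_eq (I := p ^ m - 1) (by positivity) ?_ (by omega)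
    (hp.trans (Nat.le_self_pow (by omega) p)) (by omega)
  generalize p ^ m - 1 = E
  rw [← hpM]
  ring

section Construction

variable {F : Type*} [Field F] {p E w : ℕ}

def fhsSymbol (α : F) (ι : ZMod p →+* F) (c : F) (u : ZMod p) (z : ZMod E) (y : ZMod w) :
    F × ZMod w :=
  (α ^ z.val + ι u + c, ((z.val + 1 : ℕ) : ZMod w) * y)

def fhs (E : ℕ) (α : F) (ι : ZMod p →+* F) (c : F) {n : ℕ} (t : ZMod n) : F × ZMod w :=
  fhsSymbol α ι c t.cast (t.cast : ZMod E) t.cast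

variable {α : F} {ι : ZMod p →+* F} {c c' : F} {u u' σ₀ : ZMod p} {z z' σ : ZMod E}
  {y y' ρ : ZMod w}

theorem shift_eq_of_fhsSymbol_eq_of_exponent_eq [NeZero E] (hE : E < w.minFac)
    (h : fhsSymbol α ι c u z y = fhsSymbol α ι c' (u + σ₀) z (y + ρ)) :
    ι σ₀ = c - c' ∧ ρ = 0 := by
  simp only [fhsSymbol, Prod.mk.injEq, map_add] at h
  refine ⟨by linear_combination -h.1, ?_⟩
  have hz : z.val + 1 < w.minFac := by have := ZMod.val_lt z; omega
  exact (ZMod.isUnit_natCast_of_lt_minFac z.val.succ_ne_zero hz).mul_right_eq_zero.mp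
    (by linear_combination -h.2)

theorem coords_eq_of_fhsSymbol_eq_of_shift_ne_zero [NeZero E] (hα : orderOf α = E)
    (hE : E < w.minFac) (hσ : σ ≠ 0)
    (h : fhsSymbol α ι c u z y = fhsSymbol α ι c' (u + σ₀) (z + σ) (y + ρ))
    (h' : fhsSymbol α ι c u' z' y' = fhsSymbol α ι c' (u' + σ₀) (z' + σ) (y' + ρ)) :
    z = z' ∧ y = y' := by
  simp only [fhsSymbol, Prod.mk.injEq, map_add, pow_val_add_of_orderOf_eq hα] at h h'
  have hασ : 1 - α ^ σ.val ≠ 0 := by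
    refine sub_ne_zero.mpr fun h1 => hσ (pow_val_injective_of_orderOf_eq hα ?_)
    simpa using h1.symm
  have hz : z = z' := pow_val_injective_of_orderOf_eq hα <|
    mul_right_cancel₀ hασ (by linear_combination h.1 - h'.1)
  subst hz
  refine ⟨rfl, ?_⟩
  have hne : z.val + 1 ≠ (z + σ).val + 1 := fun hzσ => hσ <| by
    simpa using ZMod.val_injective E (Nat.succ_injective hzσ)
  have hunit := ZMod.isUnit_natCast_sub_natCast_of_lt_minFac (w := w) hne
    (by have := ZMod.val_lt z; omega) (by have := ZMod.val_lt (z + σ); omega)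
  exact sub_eq_zero.mp (hunit.mul_right_eq_zero.mp (by linear_combination h.2 - h'.2))

theorem fhs_left_injective (E : ℕ) (α : F) (ι : ZMod p →+* F) {n : ℕ} (t : ZMod n) :
    Function.Injective fun c => (fhs E α ι c t : F × ZMod w) := fun c c' h => by
  simpa [fhs, fhsSymbol] using congrArg Prod.fst h

theorem fhs_cast_eq_of_coincidences [Fact p.Prime] [NeZero E] (hα : orderOf α = E)
    (hE : E < w.minFac) (hpw : p.Coprime w) (hpE : p.Coprime E)
    (hc : c - c' ∈ ι.range → c = c') {τ t t' : ZMod (w * p * E)} (hτ : ¬(c = c' ∧ τ = 0))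
    (ht : fhs E α ι c t = (fhs E α ι c' (t + τ) : F × ZMod w))
    (ht' : fhs E α ι c t' = (fhs E α ι c' (t' + τ) : F × ZMod w)) :
    (t.cast : ZMod (E * w)) = t'.cast := by
  have hwE : w.Coprime E := Nat.coprime_of_lt_minFac (NeZero.ne E) hE
  have hEw : E * w ∣ w * p * E := ⟨p, by ring⟩
  simp only [fhs, ZMod.cast_add (Dvd.intro_left _ rfl : E ∣ w * p * E),
    ZMod.cast_add (dvd_mul_of_dvd_left (dvd_mul_right w p) E),
    ZMod.cast_add (dvd_mul_of_dvd_left (dvd_mul_left p w) E)] at ht ht'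
  by_cases hσ : (τ.cast : ZMod E) = 0
  · -- a coincidence of a shift fixing the exponent `z` forces the shift to be trivial
    rw [hσ, add_zero] at ht
    obtain ⟨hσ₀, hρ⟩ := shift_eq_of_fhsSymbol_eq_of_exponent_eq hE ht
    obtain rfl := hc ⟨_, hσ₀⟩
    have hσ₀' : (τ.cast : ZMod p) = 0 := ι.injective (by rw [hσ₀, sub_self, map_zero])
    exact (hτ ⟨rfl, ZMod.eq_zero_of_cast_eq_zero_of_coprime hpw.symm
      (Nat.Coprime.mul_left hwE hpE) hρ hσ₀' hσ⟩).elim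
  · obtain ⟨hz, hy⟩ := coords_eq_of_fhsSymbol_eq_of_shift_ne_zero hα hE hσ ht ht'
    apply ZMod.eq_of_cast_eq_of_coprime hwE.symm <;>
      rw [ZMod.cast_cast_of_dvd (by simp) hEw, ZMod.cast_cast_of_dvd (by simp) hEw]
    exacts [hz, hy]

theorem partialHC_fhs_le [Fact p.Prime] [NeZero E] [NeZero w] (hα : orderOf α = E)
    (hE : E < w.minFac) (hpw : p.Coprime w) (hpE : p.Coprime E)
    (hc : c - c' ∈ ι.range → c = c') {τ : ZMod (w * p * E)} (hτ : ¬(c = c' ∧ τ = 0))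
    {β : Type*} [DecidableEq β] {e : F × ZMod w → β} (he : Function.Injective e)
    (j : ZMod (w * p * E)) (L : ℕ) :
    (partialHC (fun t => e (fhs E α ι c t)) (fun t => e (fhs E α ι c' t)) τ j L : ℤ) ≤
      ⌈((L * p : ℕ) : ℚ) / ((w * p * E : ℕ) : ℚ)⌉ := by
  have hratio : ((L * p : ℕ) : ℚ) / ((w * p * E : ℕ) : ℚ) = (L : ℚ) / (E * w : ℕ) := by
    have : (p : ℚ) ≠ 0 := by exact_mod_cast (Fact.out : p.Prime).ne_zero
    have : (E : ℚ) ≠ 0 := by exact_mod_cast NeZero.ne E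
    have : (w : ℚ) ≠ 0 := by exact_mod_cast NeZero.ne w
    push_cast
    field_simp
  rw [hratio]
  exact partialHC_le_ceil_of_cast_eq ⟨p, by ring⟩ (fun s s' hs hs' =>
    fhs_cast_eq_of_coincidences hα hE hpw hpE hc hτ (he hs) (he hs')) j L

end Construction

theorem stmt9_general (p m w : ℕ) (hp : p.Prime) (hm : 1 < m) (hwp : p ^ m < w.minFac) :
    IsStrictlyOptimalFHSSet (w * p * (p ^ m - 1)) (p ^ (m - 1)) p (p ^ m * w) := by
  have := Fact.mk hp
  have hp2 := hp.two_le
  have hpm : p < p ^ m := by simpa using Nat.pow_lt_pow_right hp.one_lt hm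
  have : NeZero w := ⟨fun h => by rw [h, Nat.minFac_zero] at hwp; omega⟩
  have : NeZero (p ^ m - 1) := ⟨by omega⟩
  refine ⟨(pengFanBound_eq_of_pow hp2 hm (NeZero.ne w)).symm, ?_⟩
  have hF := GaloisField.card p m (by omega)
  obtain ⟨α, hα⟩ := FiniteField.exists_orderOf_eq_card_sub_one (GaloisField p m)
  obtain ⟨γ, hγ⟩ := exists_fin_transversal_range_algebraMap p m (by omega) _ hF
  have hγ' : ∀ a b, γ a = γ b → a = b := fun a b h => hγ a b ⟨0, by simp [h]⟩
  let e : GaloisField p m × ZMod w ≃ Fin (p ^ m * w) :=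
    Finite.equivFinOfCardEq (by rw [Nat.card_prod, hF, Nat.card_zmod])
  have hpE : p.Coprime (p ^ m - 1) := ((Nat.coprime_self_sub_right (by omega)).mpr
    (Nat.coprime_one_right _)).coprime_dvd_left (dvd_pow_self p (by omega))
  have hpw : p.Coprime w := (Nat.coprime_of_lt_minFac hp.ne_zero (hpm.trans hwp)).symm
  have hcorr := fun a b (τ : ZMod _) (hτ : ¬(γ a = γ b ∧ τ = 0)) =>
    partialHC_fhs_le (hF ▸ hα) (by omega) hpw hpE (fun h => congrArg γ (hγ a b h)) hτ
      e.injective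
  refine ⟨fun a t => e (fhs (p ^ m - 1) α (algebraMap (ZMod p) _) (γ a) t),
    fun a b hab h => hab (hγ' a b ?_), fun L _ _ => ⟨?_, ?_⟩⟩
  · exact fhs_left_injective _ α _ 0 (e.injective (congrFun h 0))
  · exact fun a τ hτ j => hcorr a a τ (fun h => hτ h.2) j L
  · exact fun a b hab τ j => hcorr a b τ (fun h => hab (hγ' a b h.1)) j L

theorem stmt9 (p m w : ℕ) (hp : p.Prime) (hm : 1 < m)
    (hw : Odd w) (hwp : p ^ m < w.minFac) :
    IsStrictlyOptimalFHSSet (w * p * (p ^ m - 1)) (p ^ (m - 1)) p (p ^ m * w) :=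
  stmt9_general p m w hp hm hwp
end

section
/- Let q be a prime power, let α be a primitive element of the finite field F_q, and let ε : F_q^* → Z_{q−1} be the discrete logarithm to base α, i.e., ε(α^k) = k mod (q−1). Then for any two distinct elements a, b ∈ F_q, the set {ε(x−a) − ε(x−b) : x ∈ F_q \ {a, b}} equals Z_{q−1} \ {0}. -/
/-!
Writing `ε` for the discrete logarithm, `ε (x - a) - ε (x - b) = ε ((x - a) / (x - b))`, and the
Möbius map `x ↦ (x - a) / (x - b)` is a bijection from `F \ {a, b}` onto `F \ {0, 1}`. Since `ε`
maps `F \ {0}` onto `ZMod (q - 1)` and takes the value `0` exactly at `1`, the image is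
`ZMod (q - 1) \ {0}`.
-/

section DiscreteLog

variable {F : Type*} [Field F] {α : F}

theorem log_div {n : ℕ} {ε : F → ZMod n} (hα : ∀ x : F, x ≠ 0 → ∃ k : ℕ, x = α ^ k)
    (hε : ∀ k : ℕ, ε (α ^ k) = (k : ZMod n)) {x y : F} (hx : x ≠ 0) (hy : y ≠ 0) :
    ε (x / y) = ε x - ε y := by
  obtain ⟨i, hi⟩ := hα (x / y) (div_ne_zero hx hy)
  obtain ⟨k, hk⟩ := hα y hy
  have hxy : x = α ^ (i + k) := by rw [pow_add, ← hi, ← hk, div_mul_cancel₀ x hy]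
  rw [hi, hk, hxy, hε, hε, hε]
  push_cast
  ring

/-- `0 ^ 1 = 0 ^ 2` would force `1 = 2` in `ZMod n`. -/
theorem ne_zero_of_log {n : ℕ} [Nontrivial (ZMod n)] {ε : F → ZMod n}
    (hε : ∀ k : ℕ, ε (α ^ k) = (k : ZMod n)) : α ≠ 0 := by
  rintro rfl
  have h : ((1 : ℕ) : ZMod n) = (2 : ℕ) := by
    rw [← hε, ← hε, zero_pow one_ne_zero, zero_pow two_ne_zero]
  rw [Nat.cast_one, Nat.cast_ofNat, ← one_add_one_eq_two, left_eq_add] at h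
  exact one_ne_zero h

variable [Fintype F]

theorem eq_one_of_log_eq_zero {ε : F → ZMod (Fintype.card F - 1)}
    (hα : ∀ x : F, x ≠ 0 → ∃ k : ℕ, x = α ^ k)
    (hε : ∀ k : ℕ, ε (α ^ k) = (k : ZMod (Fintype.card F - 1)))
    {x : F} (hx : x ≠ 0) (h : ε x = 0) : x = 1 := by
  obtain ⟨k, rfl⟩ := hα x hx
  rw [hε, ZMod.natCast_eq_zero_iff] at h
  obtain ⟨m, rfl⟩ := h
  rcases eq_or_ne α 0 with rfl | hα0
  · rcases Nat.eq_zero_or_pos ((Fintype.card F - 1) * m) with h0 | hpos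
    · rw [h0, pow_zero]
    · exact absurd (zero_pow hpos.ne') hx
  · rw [pow_mul, FiniteField.pow_card_sub_one_eq_one α hα0, one_pow]

theorem exists_ne_zero_log_eq {ε : F → ZMod (Fintype.card F - 1)} (hα0 : α ≠ 0)
    (hε : ∀ k : ℕ, ε (α ^ k) = (k : ZMod (Fintype.card F - 1)))
    (z : ZMod (Fintype.card F - 1)) : ∃ c : F, c ≠ 0 ∧ ε c = z := by
  have : NeZero (Fintype.card F - 1) := ⟨by have := Fintype.one_lt_card (α := F); omega⟩
  obtain ⟨k, rfl⟩ := ZMod.natCast_zmod_surjective z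
  exact ⟨α ^ k, pow_ne_zero k hα0, hε k⟩

end DiscreteLog

theorem exists_ne_div_sub_eq {F : Type*} [Field F] {a b c : F} (hab : a ≠ b) (hc : c ≠ 1) :
    ∃ x : F, x ≠ b ∧ (x - a) / (x - b) = c := by
  have h1c : 1 - c ≠ 0 := sub_ne_zero.2 hc.symm
  have hxb : (a - c * b) / (1 - c) - b = (a - b) / (1 - c) := by
    field_simp
    ring
  have hxb0 : (a - c * b) / (1 - c) - b ≠ 0 := by
    rw [hxb]
    exact div_ne_zero (sub_ne_zero.2 hab) h1c
  refine ⟨(a - c * b) / (1 - c), sub_ne_zero.1 hxb0, ?_⟩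
  rw [div_eq_iff hxb0]
  field_simp
  ring

theorem stmt11_general {F : Type*} [Field F] [Fintype F]
    (q : ℕ) (hq : Fintype.card F = q)
    (α : F) (hα : ∀ x : F, x ≠ 0 → ∃ k : ℕ, x = α ^ k)
    (ε : F → ZMod (q - 1)) (hε : ∀ k : ℕ, ε (α ^ k) = (k : ZMod (q - 1)))
    (a b : F) (hab : a ≠ b) :
    {z : ZMod (q - 1) | ∃ x : F, x ≠ a ∧ x ≠ b ∧ z = ε (x - a) - ε (x - b)}
      = {z : ZMod (q - 1) | z ≠ 0} := by
  subst hq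
  have log_one : ε 1 = 0 := by simpa using hε 0
  ext z
  constructor
  · rintro ⟨x, hxa, hxb, rfl⟩ hz
    rw [← log_div hα hε (sub_ne_zero.2 hxa) (sub_ne_zero.2 hxb)] at hz
    have := eq_one_of_log_eq_zero hα hε (div_ne_zero (sub_ne_zero.2 hxa) (sub_ne_zero.2 hxb)) hz
    exact hab (sub_right_injective ((div_eq_one_iff_eq (sub_ne_zero.2 hxb)).1 this))
  · intro hz
    have : Nontrivial (ZMod (Fintype.card F - 1)) := nontrivial_of_ne z 0 hz
    obtain ⟨c, hc0, rfl⟩ := exists_ne_zero_log_eq (ne_zero_of_log hε) hε z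
    have hc1 : c ≠ 1 := by rintro rfl; exact hz log_one
    obtain ⟨x, hxb, hx⟩ := exists_ne_div_sub_eq hab hc1
    have hxa : x ≠ a := by rintro rfl; simp [eq_comm, hc0] at hx
    exact ⟨x, hxa, hxb, by rw [← log_div hα hε (sub_ne_zero.2 hxa) (sub_ne_zero.2 hxb), hx]⟩

theorem stmt11 {F : Type*} [Field F] [Fintype F] [DecidableEq F]
    (q : ℕ) (hq : Fintype.card F = q)
    (α : F) (hα : ∀ x : F, x ≠ 0 → ∃ k : ℕ, x = α ^ k)
    (ε : F → ZMod (q - 1)) (hε : ∀ k : ℕ, ε (α ^ k) = (k : ZMod (q - 1)))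
    (a b : F) (hab : a ≠ b) :
    {z : ZMod (q - 1) | ∃ x : F, x ≠ a ∧ x ≠ b ∧ z = ε (x - a) - ε (x - b)}
      = {z : ZMod (q - 1) | z ≠ 0} :=
  stmt11_general q hq α hα ε hε a b hab
end
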